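/- arXiv:2403.10985 — 4 statements merged into one kernel-verified Lean document; each statement's English description precedes it below -/
import Mathlib

section
/- For every finite simple graph G, the supremum of growth rates over all *regular* distinguishable languages over V(G) equals the Shannon capacity Θ(G) (which is the supremum of growth rates over *all* distinguishable languages over V(G)). -/
open Filter

/-- A language `L` over the vertices of `G` is distinguishable if any two distinct
equal-length words differ at some position by two non-adjacent, non-equal symbols. -/
def Distinguishable {V : Type*} (G : SimpleGraph V) (L : Set (List V)) : Prop :=
  ∀ x ∈ L, ∀ y ∈ L, x.length = y.length → x ≠ y →
    ∃ (i : ℕ) (hx : i < x.length) (hy : i < y.length),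
      x.get ⟨i, hx⟩ ≠ y.get ⟨i, hy⟩ ∧ ¬ G.Adj (x.get ⟨i, hx⟩) (y.get ⟨i, hy⟩)

/-- The growth rate of a language: `limsup |L(n)|^(1/n)`. -/
noncomputable def growthRate {V : Type*} (L : Set (List V)) : ℝ :=
  Filter.limsup (fun n : ℕ =>
    ((Set.ncard {w ∈ L | w.length = n} : ℕ) : ℝ) ^ (1 / (n : ℝ))) Filter.atTop

/-- The `n`-fold strong graph product of `G` with itself. -/
def strongPow {V : Type*} (G : SimpleGraph V) (n : ℕ) : SimpleGraph (Fin n → V) where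
  Adj x y := x ≠ y ∧ ∀ i, x i = y i ∨ G.Adj (x i) (y i)
  symm := by
    constructor
    rintro x y ⟨hne, h⟩
    exact ⟨hne.symm, fun i => (h i).imp Eq.symm (fun h' => h'.symm)⟩
  loopless := by constructor; rintro x ⟨hne, _⟩; exact hne rfl

/-- The independence number of a graph. -/
noncomputable def indepNum {V : Type*} (G : SimpleGraph V) : ℕ :=
  sSup {k | ∃ s : Set V, (s.Pairwise fun a b => ¬ G.Adj a b) ∧ s.ncard = k}

/-- The Shannon (zero-error) capacity `Θ(G) = sup_n α(G^{⊠n})^{1/n}`. -/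
noncomputable def shannonCapacity {V : Type*} (G : SimpleGraph V) : ℝ :=
  ⨆ n : ℕ, ((indepNum (strongPow G (n + 1)) : ℝ)) ^ (1 / ((n : ℝ) + 1))

/-
A distinguishable language has at most `α(G^⊠n)` words of length `n`, because the words of
length `n` form an independent set of `G^⊠n`; hence every growth rate is at most `Θ(G)`.
Conversely, let `S` be a maximum independent set of `G^⊠k`, read as a code of words of length `k`.
The language `S∗` is distinguishable (two distinct words of equal length first differ inside a
block, and two distinct blocks are non-adjacent in `G^⊠k`), regular (a left quotient of `S∗` only
depends on whether the complete blocks lie in `S` and on the incomplete last block), and has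
`|S|^m` words of length `mk`, so its growth rate is at least `α(G^⊠k)^(1/k)`.
-/

open scoped Computability

section IndepNum

variable {W : Type*} [Finite W] (H : SimpleGraph W)

lemma bddAbove_ncard_indepSet :
    BddAbove {k | ∃ s : Set W, (s.Pairwise fun a b => ¬ H.Adj a b) ∧ s.ncard = k} :=
  ⟨Nat.card W, by rintro k ⟨s, -, rfl⟩; exact Set.ncard_le_card s⟩

lemma ncard_le_indepNum {s : Set W} (hs : s.Pairwise fun a b => ¬ H.Adj a b) :
    s.ncard ≤ indepNum H :=
  le_csSup (bddAbove_ncard_indepSet H) ⟨s, hs, rfl⟩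

lemma exists_ncard_eq_indepNum :
    ∃ s : Set W, (s.Pairwise fun a b => ¬ H.Adj a b) ∧ s.ncard = indepNum H :=
  Nat.sSup_mem (s := {k | ∃ s : Set W, (s.Pairwise fun a b => ¬ H.Adj a b) ∧ s.ncard = k})
    ⟨0, ∅, by simp⟩ (bddAbove_ncard_indepSet H)

lemma indepNum_le_card : indepNum H ≤ Nat.card W := by
  obtain ⟨s, -, hs⟩ := exists_ncard_eq_indepNum H
  exact hs ▸ Set.ncard_le_card s

end IndepNum

namespace Language

variable {α : Type*} {S : Language α} {k : ℕ}

lemma mem_kstar_iff_eq_nil_or_append {x : List α} :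
    x ∈ S∗ ↔ x = [] ∨ ∃ a ∈ S, ∃ z ∈ S∗, a ++ z = x := by
  nth_rw 1 [← one_add_self_mul_kstar_eq_kstar]
  rw [mem_add, mem_one, mem_mul]

lemma append_mem_kstar_iff_of_length_eq (hS : ∀ w ∈ S, w.length = k) (hk : k ≠ 0)
    {b : List α} (hb : b.length = k) {z : List α} :
    b ++ z ∈ S∗ ↔ b ∈ S ∧ z ∈ S∗ := by
  rw [mem_kstar_iff_eq_nil_or_append]
  constructor
  · rintro (h | ⟨a, ha, c, hc, h⟩)
    · rw [List.append_eq_nil_iff] at h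
      simp [h.1] at hb
      omega
    · obtain ⟨rfl, rfl⟩ := List.append_inj h ((hS a ha).trans hb.symm)
      exact ⟨ha, hc⟩
  · rintro ⟨hb, hz⟩
    exact Or.inr ⟨b, hb, z, hz, rfl⟩

open scoped Classical in
lemma leftQuotient_kstar_append (hS : ∀ w ∈ S, w.length = k) (hk : k ≠ 0)
    {b : List α} (hb : b.length = k) (x : List α) :
    S∗.leftQuotient (b ++ x) = if b ∈ S then S∗.leftQuotient x else 0 := by
  ext z
  split_ifs with h <;>
    simp [List.append_assoc, append_mem_kstar_iff_of_length_eq hS hk hb, h, notMem_zero]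

lemma isRegular_kstar_of_length_eq [Finite α] (hS : ∀ w ∈ S, w.length = k) (hk : k ≠ 0) :
    S∗.IsRegular := by
  refine IsRegular.of_finite_range_leftQuotient <|
    (((List.finite_length_le α k).image S∗.leftQuotient).insert 0).subset ?_
  rintro _ ⟨x, rfl⟩
  induction hx : x.length using Nat.strong_induction_on generalizing x with
  | _ m ih =>
    by_cases hxk : x.length ≤ k
    · exact Or.inr ⟨x, hxk, rfl⟩
    · rw [← List.take_append_drop k x,
        leftQuotient_kstar_append hS hk (List.length_take_of_le (by omega))]
      split_ifs
      · exact ih _ (by simp; omega) _ rfl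
      · exact Or.inl rfl

lemma pow_ncard_le_ncard_kstar_length_eq [Finite α] (hS : ∀ w ∈ S, w.length = k) (m : ℕ) :
    Set.ncard S ^ m ≤ {w ∈ S∗ | w.length = m * k}.ncard := by
  induction m with
  | zero =>
    have h : {w ∈ S∗ | w.length = 0 * k} = {[]} := by
      ext w
      simpa [List.length_eq_zero_iff] using fun h : w = [] => h ▸ nil_mem_kstar S
    rw [pow_zero, h, Set.ncard_singleton]
  | succ m ih =>
    let S' : Set (List α) := S
    let T := {w ∈ S∗ | w.length = m * k}
    calc Set.ncard S ^ (m + 1) ≤ S'.ncard * T.ncard := by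
          rw [pow_succ']
          exact Nat.mul_le_mul_left _ ih
      _ = (S' ×ˢ T).ncard := Set.ncard_prod.symm
      _ ≤ _ := by
        refine Set.ncard_le_ncard_of_injOn (fun p => p.1 ++ p.2) ?_ ?_
          ((List.finite_length_eq α _).subset fun w hw => hw.2)
        · rintro ⟨a, z⟩ ⟨ha, hz, hzk⟩
          refine ⟨mem_kstar_iff_eq_nil_or_append.2 (Or.inr ⟨a, ha, z, hz, rfl⟩), ?_⟩
          simp [hS a ha, hzk, add_mul, add_comm]
        · rintro ⟨a, z⟩ ⟨ha, -⟩ ⟨b, y⟩ ⟨hb, -⟩ h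
          obtain ⟨rfl, rfl⟩ := List.append_inj h ((hS a ha).trans (hS b hb).symm)
          rfl

end Language

lemma rpow_one_div_le_of_le_pow {x c : ℝ} {n : ℕ} (hx : 0 ≤ x) (hc : 0 ≤ c) (hn : n ≠ 0)
    (h : x ≤ c ^ n) : x ^ (1 / (n : ℝ)) ≤ c := by
  rw [one_div, Real.rpow_inv_le_iff_of_pos hx hc (by positivity), Real.rpow_natCast]
  exact h

lemma rpow_one_div_mul_pow {x : ℝ} (hx : 0 ≤ x) {j : ℕ} (hj : j ≠ 0) (k : ℕ) :
    (x ^ j) ^ (1 / ((j * k : ℕ) : ℝ)) = x ^ (1 / (k : ℝ)) := by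
  rw [← Real.rpow_natCast, ← Real.rpow_mul hx]
  congr 1
  push_cast
  field_simp

section Words

variable {V : Type*} {G : SimpleGraph V}

lemma ncard_words_eq (L : Set (List V)) (n : ℕ) :
    {w ∈ L | w.length = n}.ncard = {v : Fin n → V | List.ofFn v ∈ L}.ncard := by
  rw [← Set.ncard_image_of_injective _ List.ofFn_injective]
  congr 1
  ext w
  constructor
  · rintro ⟨hw, rfl⟩
    exact ⟨w.get, by simpa using hw, List.ofFn_get w⟩
  · rintro ⟨v, hv, rfl⟩
    exact ⟨hv, List.length_ofFn⟩

lemma strongPow_adj_iff {n : ℕ} {v u : Fin n → V} :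
    (strongPow G n).Adj v u ↔ v ≠ u ∧ ∀ i, v i = u i ∨ G.Adj (v i) (u i) :=
  Iff.rfl

lemma not_strongPow_adj_iff {n : ℕ} {v u : Fin n → V} (hvu : v ≠ u) :
    ¬ (strongPow G n).Adj v u ↔ ∃ i, v i ≠ u i ∧ ¬ G.Adj (v i) (u i) := by
  simp only [strongPow_adj_iff, hvu, ne_eq, not_false_eq_true, true_and, not_forall, not_or]

def DistinguishableWords (G : SimpleGraph V) (x y : List V) : Prop :=
  ∃ (i : ℕ) (hx : i < x.length) (hy : i < y.length),
    x.get ⟨i, hx⟩ ≠ y.get ⟨i, hy⟩ ∧ ¬ G.Adj (x.get ⟨i, hx⟩) (y.get ⟨i, hy⟩)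

namespace DistinguishableWords

lemma append {x₁ y₁ : List V} (h : DistinguishableWords G x₁ y₁) (x₂ y₂ : List V) :
    DistinguishableWords G (x₁ ++ x₂) (y₁ ++ y₂) := by
  obtain ⟨i, hx, hy, h⟩ := h
  refine ⟨i, by simp; omega, by simp; omega, ?_⟩
  simpa only [List.get_eq_getElem, List.getElem_append_left hx, List.getElem_append_left hy]

lemma append_left (z : List V) {x y : List V} (h : DistinguishableWords G x y) :
    DistinguishableWords G (z ++ x) (z ++ y) := by
  obtain ⟨i, hx, hy, h⟩ := h
  refine ⟨z.length + i, by simp; omega, by simp; omega, ?_⟩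
  simpa only [List.get_eq_getElem, List.getElem_append_right (Nat.le_add_right _ _),
    Nat.add_sub_cancel_left]

lemma ofFn_iff {n : ℕ} {v u : Fin n → V} :
    DistinguishableWords G (List.ofFn v) (List.ofFn u) ↔
      ∃ i, v i ≠ u i ∧ ¬ G.Adj (v i) (u i) := by
  simp [DistinguishableWords, Fin.exists_iff]

end DistinguishableWords

lemma Distinguishable.pairwise_not_strongPow_adj {L : Set (List V)} (hL : Distinguishable G L)
    (n : ℕ) :
    {v : Fin n → V | List.ofFn v ∈ L}.Pairwise fun v u => ¬ (strongPow G n).Adj v u := by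
  intro v hv u hu hvu
  rw [not_strongPow_adj_iff hvu, ← DistinguishableWords.ofFn_iff]
  exact hL _ hv _ hu (by simp) (List.ofFn_injective.ne hvu)

lemma distinguishable_image_ofFn {n : ℕ} {s : Set (Fin n → V)}
    (hs : s.Pairwise fun v u => ¬ (strongPow G n).Adj v u) :
    Distinguishable G (List.ofFn '' s) := by
  rintro _ ⟨v, hv, rfl⟩ _ ⟨u, hu, rfl⟩ - hne
  have hvu : v ≠ u := by rintro rfl; exact hne rfl
  exact DistinguishableWords.ofFn_iff.2 ((not_strongPow_adj_iff hvu).1 (hs hv hu hvu))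

lemma Distinguishable.kstar {S : Language V} {k : ℕ} (hS : ∀ w ∈ S, w.length = k)
    (hk : k ≠ 0) (hd : Distinguishable G S) : Distinguishable G (S∗ : Language V) := by
  intro x hx y hy hlen hne
  change DistinguishableWords G x y
  induction hm : x.length using Nat.strong_induction_on generalizing x y with
  | _ m ih =>
    rcases Language.mem_kstar_iff_eq_nil_or_append.1 hx with rfl | ⟨a, ha, x', hx', rfl⟩
    · exact absurd (List.length_eq_zero_iff.1 hlen.symm).symm hne
    rcases Language.mem_kstar_iff_eq_nil_or_append.1 hy with rfl | ⟨b, hb, y', hy', rfl⟩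
    · simp [hS a ha, hk] at hlen
    have hab : a.length = b.length := (hS a ha).trans (hS b hb).symm
    by_cases h : a = b
    · subst h
      refine (ih x'.length (by simp [← hm, hS a ha]; omega) x' hx' y' hy' (by simpa using hlen)
        (by simpa using hne) rfl).append_left a
    · exact DistinguishableWords.append (hd a ha b hb hab h) x' y'

end Words

section Growth

variable {V : Type*} [Finite V] {G : SimpleGraph V}

lemma ncard_words_le_card_pow (L : Set (List V)) (n : ℕ) :
    {w ∈ L | w.length = n}.ncard ≤ Nat.card V ^ n := by
  rw [ncard_words_eq]
  simpa [Nat.card_fun] using Set.ncard_le_card {v : Fin n → V | List.ofFn v ∈ L}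

lemma isBoundedUnder_ncard_words_rpow (L : Set (List V)) :
    IsBoundedUnder (· ≤ ·) atTop fun n : ℕ =>
      ((Set.ncard {w ∈ L | w.length = n} : ℕ) : ℝ) ^ (1 / (n : ℝ)) := by
  refine isBoundedUnder_of ⟨max 1 (Nat.card V), fun n => ?_⟩
  rcases eq_or_ne n 0 with rfl | hn
  · simp
  · refine (rpow_one_div_le_of_le_pow (by positivity) (by positivity) hn ?_).trans
      (le_max_right _ _)
    exact_mod_cast ncard_words_le_card_pow L n

lemma Distinguishable.ncard_words_le_indepNum {L : Set (List V)}
    (hL : Distinguishable G L) (n : ℕ) :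
    {w ∈ L | w.length = n}.ncard ≤ indepNum (strongPow G n) := by
  rw [ncard_words_eq]
  exact ncard_le_indepNum _ (hL.pairwise_not_strongPow_adj n)

lemma indepNum_strongPow_rpow_le (G : SimpleGraph V) (n : ℕ) :
    (indepNum (strongPow G (n + 1)) : ℝ) ^ (1 / ((n : ℝ) + 1)) ≤ Nat.card V := by
  have h := rpow_one_div_le_of_le_pow (x := indepNum (strongPow G (n + 1)))
    (Nat.cast_nonneg _) (Nat.cast_nonneg (Nat.card V)) n.succ_ne_zero
    (by exact_mod_cast (indepNum_le_card _).trans_eq (by simp [Nat.card_fun]))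
  simpa using h

lemma le_shannonCapacity (G : SimpleGraph V) (n : ℕ) :
    (indepNum (strongPow G (n + 1)) : ℝ) ^ (1 / ((n : ℝ) + 1)) ≤ shannonCapacity G :=
  le_ciSup (f := fun n : ℕ => (indepNum (strongPow G (n + 1)) : ℝ) ^ (1 / ((n : ℝ) + 1)))
    ⟨Nat.card V, by rintro _ ⟨m, rfl⟩; exact indepNum_strongPow_rpow_le G m⟩ n

lemma Distinguishable.growthRate_le_shannonCapacity {L : Set (List V)}
    (hL : Distinguishable G L) : growthRate L ≤ shannonCapacity G := by
  refine limsup_le_of_le (isCoboundedUnder_le_of_le atTop fun _ => by positivity) ?_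
  filter_upwards [eventually_ne_atTop 0] with m hm
  obtain ⟨n, rfl⟩ := Nat.exists_eq_add_one_of_ne_zero hm
  calc ((Set.ncard {w ∈ L | w.length = n + 1} : ℕ) : ℝ) ^ (1 / ((n + 1 : ℕ) : ℝ))
      ≤ (indepNum (strongPow G (n + 1)) : ℝ) ^ (1 / ((n : ℝ) + 1)) := by
        push_cast
        gcongr
        exact_mod_cast hL.ncard_words_le_indepNum (n + 1)
    _ ≤ shannonCapacity G := le_shannonCapacity G n

lemma le_growthRate_kstar {S : Language V} {k : ℕ} (hS : ∀ w ∈ S, w.length = k) (hk : k ≠ 0) :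
    (Set.ncard S : ℝ) ^ (1 / (k : ℝ)) ≤ growthRate (S∗ : Language V) := by
  refine le_limsup_of_frequently_le ?_ (isBoundedUnder_ncard_words_rpow _)
  refine frequently_atTop.2 fun N => ⟨(N + 1) * k, ?_, ?_⟩
  · exact N.le_succ.trans (Nat.le_mul_of_pos_right _ (Nat.pos_of_ne_zero hk))
  · rw [← rpow_one_div_mul_pow (Nat.cast_nonneg _) N.succ_ne_zero k]
    gcongr
    exact_mod_cast Language.pow_ncard_le_ncard_kstar_length_eq hS (N + 1)

lemma exists_isRegular_distinguishable_le_growthRate (G : SimpleGraph V) (n : ℕ) :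
    ∃ L : Language V, L.IsRegular ∧ Distinguishable G L ∧
      (indepNum (strongPow G (n + 1)) : ℝ) ^ (1 / ((n : ℝ) + 1)) ≤ growthRate L := by
  obtain ⟨s, hs, hcard⟩ := exists_ncard_eq_indepNum (strongPow G (n + 1))
  have hS : ∀ w ∈ (List.ofFn '' s : Language V), w.length = n + 1 := by
    rintro _ ⟨v, -, rfl⟩
    exact List.length_ofFn
  refine ⟨_, Language.isRegular_kstar_of_length_eq hS n.succ_ne_zero,
    (distinguishable_image_ofFn hs).kstar hS n.succ_ne_zero, ?_⟩
  have h := le_growthRate_kstar hS n.succ_ne_zero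
  rw [Set.ncard_image_of_injective _ List.ofFn_injective, hcard] at h
  simpa using h

end Growth

lemma csSup_eq_ciSup_of_forall_le_of_forall_exists_ge {α ι : Type*}
    [ConditionallyCompleteLattice α] [Nonempty ι] {s : Set α} {f : ι → α}
    (hle : ∀ r ∈ s, r ≤ ⨆ i, f i) (hge : ∀ i, ∃ r ∈ s, f i ≤ r) : sSup s = ⨆ i, f i := by
  obtain ⟨r₀, hr₀, -⟩ := hge (Classical.arbitrary ι)
  refine le_antisymm (csSup_le ⟨r₀, hr₀⟩ hle) (ciSup_le fun i => ?_)
  obtain ⟨r, hr, hfr⟩ := hge i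
  exact hfr.trans (le_csSup ⟨_, hle⟩ hr)

/-- the supremum of growth rates of regular distinguishable languages equals
the Shannon capacity, which is also the supremum of growth rates over all
distinguishable languages. -/
theorem regular_distinguishable_sup_growthRate_eq_shannonCapacity
    {V : Type*} [Fintype V] (G : SimpleGraph V) :
    sSup {r : ℝ | ∃ L : Language V, L.IsRegular ∧ Distinguishable G L ∧ growthRate L = r}
      = shannonCapacity G ∧
    sSup {r : ℝ | ∃ L : Set (List V), Distinguishable G L ∧ growthRate L = r}
      = shannonCapacity G := by
  have hreg := exists_isRegular_distinguishable_le_growthRate G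
  constructor
  · refine csSup_eq_ciSup_of_forall_le_of_forall_exists_ge ?_ fun n => ?_
    · rintro _ ⟨L, -, hL, rfl⟩
      exact hL.growthRate_le_shannonCapacity
    · obtain ⟨L, hL_reg, hL, hle⟩ := hreg n
      exact ⟨_, ⟨L, hL_reg, hL, rfl⟩, hle⟩
  · refine csSup_eq_ciSup_of_forall_le_of_forall_exists_ge ?_ fun n => ?_
    · rintro _ ⟨L, hL, rfl⟩
      exact hL.growthRate_le_shannonCapacity
    · obtain ⟨L, -, hL, hle⟩ := hreg n
      exact ⟨_, ⟨L, hL, rfl⟩, hle⟩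
end

section
/- Let D be a DFA over alphabet V(G) with d states, all reachable from the initial state, with exactly one absorbing state s_abs which is rejecting, and whose remaining d−1 states form a single strongly connected component containing at least one accepting state. Let R be the (d−1)×(d−1) nonnegative integer matrix indexed by the non-absorbing states with R_{s,s'} = #{ x ∈ V(G) : T(s,x) = s' }. Then the growth rate of the language recognized by D equals the spectral radius of R (its largest real eigenvalue). -/
/-!
Words that fall into the absorbing rejecting state never leave it, so the number of words of
length `n` accepted from a non-absorbing state `s` is `(R ^ n *ᵥ a) s`, where `a` is the
indicator of the accepting states. For the nonnegative irreducible matrix `R` these numbers grow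
like `ρ ^ n`, with `ρ` the spectral radius of `R` over `ℂ`: they are bounded by the entry sum of
`R ^ n`, whose `n`-th root tends to `ρ` by Gelfand's formula, and conversely every entry of
`R ^ n` can be routed from the start state to an accepting state at the cost of a bounded number
of extra letters. Finally `ρ` is the largest real eigenvalue. By the Collatz–Wielandt bound
(`c • z ≤ R *ᵥ z` with `0 ≤ z ≠ 0` forces `c ≤ ρ`) no real eigenvalue exceeds `ρ`; and the moduli
`x` of a complex eigenvector for an eigenvalue of modulus `ρ` satisfy `ρ • x ≤ R *ᵥ x`, with
equality, since a strict inequality would, after smoothing by a positive polynomial in `R`,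
contradict the same bound.
-/

open Filter

/-- A state of a DFA is absorbing if no input symbol ever leaves it. -/
def IsAbsorbing {α σ : Type*} (M : DFA α σ) (s : σ) : Prop := ∀ a, M.step s a = s

/-- State `t` is reachable from state `s` in the DFA `M`. -/
def Reaches {α σ : Type*} (M : DFA α σ) (s t : σ) : Prop :=
  Relation.ReflTransGen (fun p q => ∃ a, M.step p a = q) s t

open Matrix Topology

lemma single_le_sum_sum {ι κ M : Type*} [Fintype ι] [Fintype κ] [AddCommMonoid M] [PartialOrder M]
    [IsOrderedAddMonoid M] {f : ι → κ → M} (hf : ∀ i j, 0 ≤ f i j) (i : ι) (j : κ) :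
    f i j ≤ ∑ i, ∑ j, f i j :=
  (Finset.single_le_sum (fun j _ => hf i j) (Finset.mem_univ j)).trans
    (Finset.single_le_sum (f := fun i => ∑ j, f i j)
      (fun i _ => Finset.sum_nonneg fun j _ => hf i j) (Finset.mem_univ i))

lemma exists_pos_smul_le {ι : Type*} [Finite ι] (x : ι → ℝ) {y : ι → ℝ} (hy : ∀ i, 0 < y i) :
    ∃ ε : ℝ, 0 < ε ∧ ε • x ≤ y := by
  have hsmall : ∀ᶠ ε in 𝓝[>] (0 : ℝ), ∀ i, ε * x i < y i :=
    eventually_all.2 fun i => nhdsWithin_le_nhds <|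
      ((continuous_id.mul continuous_const).tendsto' 0 0 (zero_mul _)).eventually
        (gt_mem_nhds (hy i))
  obtain ⟨ε, hε, hεpos⟩ := (hsmall.and self_mem_nhdsWithin).exists
  exact ⟨ε, hεpos, fun i => (hε i).le⟩

section RootAsymptotics

variable {u v : ℕ → ℝ} {ρ C : ℝ}

lemma tendsto_const_rpow_one_div_natCast {c : ℝ} (hc : 0 < c) :
    Tendsto (fun n : ℕ => c ^ (1 / (n : ℝ))) atTop (𝓝 1) := by
  simpa [Function.comp_def] using ((Real.continuousAt_const_rpow hc.ne').tendsto.comp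
    tendsto_one_div_atTop_nhds_zero_nat)

lemma rpow_one_div_natCast_mul_pow {c x : ℝ} (hc : 0 ≤ c) (hx : 0 ≤ x) {n : ℕ} (hn : n ≠ 0) :
    (c * x ^ n) ^ (1 / (n : ℝ)) = c ^ (1 / (n : ℝ)) * x := by
  rw [Real.mul_rpow hc (pow_nonneg hx n), one_div, Real.pow_rpow_inv_natCast hx hn]

lemma Filter.Tendsto.const_mul_rpow_one_div (hC : 0 < C) (hv : 0 ≤ v)
    (h : Tendsto (fun n : ℕ => v n ^ (1 / (n : ℝ))) atTop (𝓝 ρ)) :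
    Tendsto (fun n : ℕ => (C * v n) ^ (1 / (n : ℝ))) atTop (𝓝 ρ) := by
  simpa [Real.mul_rpow hC.le (hv _)] using (tendsto_const_rpow_one_div_natCast hC).mul h

lemma nonneg_of_le_const_mul (hu : 0 ≤ u) (hC : 0 < C) (huv : ∀ n, u n ≤ C * v n) : 0 ≤ v :=
  fun n => nonneg_of_mul_nonneg_right ((hu n).trans (huv n)) hC

lemma isBoundedUnder_rpow_one_div_of_le_const_mul (hu : 0 ≤ u) (hC : 0 < C)
    (huv : ∀ n, u n ≤ C * v n) (hv : Tendsto (fun n : ℕ => v n ^ (1 / (n : ℝ))) atTop (𝓝 ρ)) :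
    IsBoundedUnder (· ≤ ·) atTop fun n : ℕ => u n ^ (1 / (n : ℝ)) :=
  (hv.const_mul_rpow_one_div hC (nonneg_of_le_const_mul hu hC huv)).isBoundedUnder_le.mono_le <|
    .of_forall fun n => Real.rpow_le_rpow (hu n) (huv n) (by positivity)

lemma limsup_rpow_one_div_le_of_le_const_mul (hu : 0 ≤ u) (hC : 0 < C)
    (huv : ∀ n, u n ≤ C * v n) (hv : Tendsto (fun n : ℕ => v n ^ (1 / (n : ℝ))) atTop (𝓝 ρ)) :
    limsup (fun n : ℕ => u n ^ (1 / (n : ℝ))) atTop ≤ ρ := by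
  have hw := hv.const_mul_rpow_one_div hC (nonneg_of_le_const_mul hu hC huv)
  rw [← hw.limsup_eq]
  exact limsup_le_limsup (.of_forall fun n => Real.rpow_le_rpow (hu n) (huv n) (by positivity))
    (isCoboundedUnder_le_of_le atTop fun n => Real.rpow_nonneg (hu n) _) hw.isBoundedUnder_le

lemma le_limsup_rpow_one_div_of_frequently {c γ : ℝ} (hc : 0 < c) (hγ : 0 ≤ γ)
    (hbdd : IsBoundedUnder (· ≤ ·) atTop fun n : ℕ => u n ^ (1 / (n : ℝ)))
    (h : ∃ᶠ n in atTop, c * γ ^ n ≤ u n) :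
    γ ≤ limsup (fun n : ℕ => u n ^ (1 / (n : ℝ))) atTop := by
  refine le_of_forall_lt_imp_le_of_dense fun β hβ => le_limsup_of_frequently_le ?_ hbdd
  have hlim : ∀ᶠ n : ℕ in atTop, β < c ^ (1 / (n : ℝ)) * γ :=
    ((tendsto_const_rpow_one_div_natCast hc).mul_const γ).eventually_const_lt (by simpa using hβ)
  refine (h.and_eventually (hlim.and (eventually_ne_atTop 0))).mono ?_
  rintro n ⟨hn, hβn, hn0⟩
  rw [← rpow_one_div_natCast_mul_pow hc.le hγ hn0] at hβn
  exact hβn.le.trans (Real.rpow_le_rpow (by positivity) hn (by positivity))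

lemma le_limsup_rpow_one_div_of_le_const_mul_add {K : ℕ} (hu : 0 ≤ u) (hv0 : 0 ≤ v)
    (hC : 0 < C) (hvu : ∀ n, ∃ k ≤ K, v n ≤ C * u (n + k))
    (hbdd : IsBoundedUnder (· ≤ ·) atTop fun n : ℕ => u n ^ (1 / (n : ℝ)))
    (hv : Tendsto (fun n : ℕ => v n ^ (1 / (n : ℝ))) atTop (𝓝 ρ)) :
    ρ ≤ limsup (fun n : ℕ => u n ^ (1 / (n : ℝ))) atTop := by
  refine le_of_forall_lt_imp_le_of_dense fun γ hγ => ?_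
  rcases le_or_gt γ 0 with hγ0 | hγ0
  · exact hγ0.trans (le_limsup_of_frequently_le
      (.of_forall fun n => Real.rpow_nonneg (hu n) _) hbdd)
  have hpow : ∀ᶠ n : ℕ in atTop, γ ^ n ≤ v n := by
    filter_upwards [hv.eventually_const_lt hγ, eventually_ne_atTop 0] with n hn hn0
    simpa [one_div, Real.rpow_inv_natCast_pow (hv0 n) hn0] using
      pow_le_pow_left₀ hγ0.le hn.le n
  refine le_limsup_rpow_one_div_of_frequently (c := (C * max 1 γ ^ K)⁻¹) (by positivity)
    hγ0.le hbdd (frequently_atTop.2 fun N => ?_)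
  obtain ⟨N₀, hN₀⟩ := eventually_atTop.1 hpow
  obtain ⟨k, hkK, hk⟩ := hvu (max N N₀)
  refine ⟨max N N₀ + k, le_add_right (le_max_left _ _), ?_⟩
  have hγk : γ ^ k ≤ max 1 γ ^ K := (pow_le_pow_left₀ hγ0.le (le_max_right _ _) k).trans
    (pow_le_pow_right₀ (le_max_left _ _) hkK)
  calc (C * max 1 γ ^ K)⁻¹ * γ ^ (max N N₀ + k)
        = C⁻¹ * γ ^ max N N₀ * (γ ^ k / max 1 γ ^ K) := by rw [pow_add]; ring
    _ ≤ C⁻¹ * γ ^ max N N₀ :=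
        mul_le_of_le_one_right (by positivity) (div_le_one_of_le₀ hγk (by positivity))
    _ ≤ C⁻¹ * v (max N N₀) := by gcongr; exact hN₀ _ (le_max_right _ _)
    _ ≤ u (max N N₀ + k) := by rw [inv_mul_le_iff₀ hC]; exact hk

lemma limsup_rpow_one_div_eq_of_comparable {C₁ C₂ : ℝ} {K : ℕ} (hu : 0 ≤ u)
    (hC₁ : 0 < C₁) (huv : ∀ n, u n ≤ C₁ * v n) (hC₂ : 0 < C₂)
    (hvu : ∀ n, ∃ k ≤ K, v n ≤ C₂ * u (n + k))
    (hv : Tendsto (fun n : ℕ => v n ^ (1 / (n : ℝ))) atTop (𝓝 ρ)) :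
    limsup (fun n : ℕ => u n ^ (1 / (n : ℝ))) atTop = ρ :=
  (limsup_rpow_one_div_le_of_le_const_mul hu hC₁ huv hv).antisymm <|
    le_limsup_rpow_one_div_of_le_const_mul_add hu (nonneg_of_le_const_mul hu hC₁ huv) hC₂ hvu
      (isBoundedUnder_rpow_one_div_of_le_const_mul hu hC₁ huv hv) hv

end RootAsymptotics

namespace Matrix

variable {ι : Type*} [Fintype ι] {B : Matrix ι ι ℝ}

lemma mulVec_mono (hB : ∀ i j, 0 ≤ B i j) {x y : ι → ℝ} (hxy : x ≤ y) : B *ᵥ x ≤ B *ᵥ y :=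
  fun i => Finset.sum_le_sum fun j _ => mul_le_mul_of_nonneg_left (hxy j) (hB i j)

lemma mulVec_apply_le_sum_mul_sum (hB : ∀ i j, 0 ≤ B i j) {x : ι → ℝ} (hx : 0 ≤ x) (i : ι) :
    (B *ᵥ x) i ≤ (∑ k, x k) * ∑ i, ∑ j, B i j := by
  calc (B *ᵥ x) i = ∑ j, B i j * x j := rfl
    _ ≤ ∑ j, B i j * ∑ k, x k := Finset.sum_le_sum fun j _ => mul_le_mul_of_nonneg_left
        (Finset.single_le_sum (fun k _ => hx k) (Finset.mem_univ j)) (hB i j)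
    _ = (∑ k, x k) * ∑ j, B i j := by rw [← Finset.sum_mul, mul_comm]
    _ ≤ (∑ k, x k) * ∑ i, ∑ j, B i j := mul_le_mul_of_nonneg_left
        (Finset.single_le_sum (f := fun i => ∑ j, B i j)
          (fun i _ => Finset.sum_nonneg fun j _ => hB i j) (Finset.mem_univ i))
        (Finset.sum_nonneg fun k _ => hx k)

lemma mulVec_apply_pos {P : Matrix ι ι ℝ} (hP : ∀ i j, 0 < P i j) {x : ι → ℝ} (hx : 0 ≤ x)
    (hx0 : x ≠ 0) (i : ι) : 0 < (P *ᵥ x) i := by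
  obtain ⟨j, hj⟩ := Function.ne_iff.1 hx0
  exact Finset.sum_pos' (fun k _ => mul_nonneg (hP i k).le (hx k))
    ⟨j, Finset.mem_univ j, mul_pos (hP i j) ((hx j).lt_of_ne' hj)⟩

lemma norm_smul_le_mulVec_norm {𝕜 : Type*} [RCLike 𝕜] (hB : ∀ i j, 0 ≤ B i j) {v : ι → 𝕜}
    {z : 𝕜} (hv : B.map ((↑) : ℝ → 𝕜) *ᵥ v = z • v) :
    ‖z‖ • (fun i => ‖v i‖) ≤ B *ᵥ fun i => ‖v i‖ := by
  intro i
  calc ‖z‖ * ‖v i‖ = ‖∑ j, (B i j : 𝕜) * v j‖ := by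
        rw [← norm_mul, ← smul_eq_mul, ← Pi.smul_apply z v i, ← hv]; rfl
    _ ≤ ∑ j, ‖(B i j : 𝕜) * v j‖ := norm_sum_le _ _
    _ = (B *ᵥ fun i => ‖v i‖) i := Finset.sum_congr rfl fun j _ => by
        rw [norm_mul, RCLike.norm_ofReal, abs_of_nonneg (hB i j)]

section LinftyNorm

-- Gelfand's formula needs a Banach algebra norm; the `ℓ∞` operator norm, a maximal row sum, is
-- comparable to the entry sum of a nonnegative matrix.
attribute [local instance] Matrix.linftyOpNormedAddCommGroup

lemma sum_row_le_norm_map_ofReal (hB : ∀ i j, 0 ≤ B i j) (i : ι) :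
    ∑ j, B i j ≤ ‖B.map ((↑) : ℝ → ℂ)‖ := by
  rw [linfty_opNorm_def]
  refine le_of_eq_of_le ?_ (NNReal.coe_le_coe.2 (Finset.le_sup (Finset.mem_univ i)))
  simp [abs_of_nonneg (hB i _)]

lemma norm_map_ofReal_le_sum (hB : ∀ i j, 0 ≤ B i j) :
    ‖B.map ((↑) : ℝ → ℂ)‖ ≤ ∑ i, ∑ j, B i j := by
  rw [linfty_opNorm_def]
  refine le_of_le_of_eq (NNReal.coe_le_coe.2 (Finset.sup_le fun i _ => Finset.single_le_sum
    (f := fun i => ∑ j, ‖B.map ((↑) : ℝ → ℂ) i j‖₊) (fun _ _ => zero_le) (Finset.mem_univ i))) ?_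
  simp [abs_of_nonneg (hB _ _)]

end LinftyNorm

variable [DecidableEq ι]

noncomputable def complexSpectralRadius (B : Matrix ι ι ℝ) : ℝ :=
  (spectralRadius ℂ (B.map ((↑) : ℝ → ℂ))).toReal

lemma complexSpectralRadius_nonneg (B : Matrix ι ι ℝ) : 0 ≤ complexSpectralRadius B :=
  ENNReal.toReal_nonneg

lemma pow_apply_mul_pow_apply_le (hB : ∀ i j, 0 ≤ B i j) (p q : ℕ) (i j k : ι) :
    (B ^ p) i j * (B ^ q) j k ≤ (B ^ (p + q)) i k := by
  rw [pow_add, mul_apply]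
  exact Finset.single_le_sum (f := fun l => (B ^ p) i l * (B ^ q) l k)
    (fun l _ => mul_nonneg (pow_apply_nonneg hB p i l) (pow_apply_nonneg hB q l k))
    (Finset.mem_univ j)

section LinftyNorm

attribute [local instance] Matrix.linftyOpNormedAddCommGroup Matrix.linftyOpNormedRing
  Matrix.linftyOpNormedAlgebra

lemma map_ofReal_pow (B : Matrix ι ι ℝ) (n : ℕ) :
    (B ^ n).map ((↑) : ℝ → ℂ) = B.map ((↑) : ℝ → ℂ) ^ n :=
  Matrix.map_pow B Complex.ofRealHom n

lemma tendsto_sum_pow_apply_rpow [Nonempty ι] (hB : ∀ i j, 0 ≤ B i j) :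
    Tendsto (fun n : ℕ => (∑ i, ∑ j, (B ^ n) i j) ^ (1 / (n : ℝ))) atTop
      (𝓝 (complexSpectralRadius B)) := by
  set A := B.map ((↑) : ℝ → ℂ)
  have hfin : spectralRadius ℂ A ≠ ⊤ :=
    ((spectrum.spectralRadius_le_nnnorm A).trans_lt ENNReal.coe_lt_top).ne
  have hgelfand : Tendsto (fun n : ℕ => ‖A ^ n‖ ^ (1 / (n : ℝ))) atTop
      (𝓝 (complexSpectralRadius B)) :=
    ((ENNReal.tendsto_toReal hfin).comp
      (spectrum.pow_norm_pow_one_div_tendsto_nhds_spectralRadius A)).congr fun n =>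
        ENNReal.toReal_ofReal (by positivity)
  have hle : ∀ n : ℕ, ∑ i, ∑ j, (B ^ n) i j ≤ Fintype.card ι * ‖A ^ n‖ := fun n => by
    rw [← map_ofReal_pow, ← nsmul_eq_mul, ← Finset.card_univ, ← Finset.sum_const]
    exact Finset.sum_le_sum fun i _ => sum_row_le_norm_map_ofReal (pow_apply_nonneg hB n) i
  refine tendsto_of_tendsto_of_tendsto_of_le_of_le hgelfand
    (hgelfand.const_mul_rpow_one_div (by positivity) fun n => norm_nonneg _) (fun n => ?_)
    fun n => Real.rpow_le_rpow (Finset.sum_nonneg fun i _ => Finset.sum_nonneg fun j _ =>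
      pow_apply_nonneg hB n i j) (hle n) (by positivity)
  refine Real.rpow_le_rpow (norm_nonneg _) ?_ (by positivity)
  rw [← map_ofReal_pow]
  exact norm_map_ofReal_le_sum (pow_apply_nonneg hB n)

lemma exists_mulVec_eq_smul_norm_eq_complexSpectralRadius [Nonempty ι] (B : Matrix ι ι ℝ) :
    ∃ (z : ℂ) (v : ι → ℂ), v ≠ 0 ∧ B.map ((↑) : ℝ → ℂ) *ᵥ v = z • v ∧
      ‖z‖ = complexSpectralRadius B := by
  obtain ⟨z, hz, hnorm⟩ := spectrum.exists_nnnorm_eq_spectralRadius (B.map ((↑) : ℝ → ℂ))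
  rw [← Matrix.spectrum_toLin', ← Module.End.hasEigenvalue_iff_mem_spectrum] at hz
  obtain ⟨v, hv⟩ := hz.exists_hasEigenvector
  refine ⟨z, v, hv.2, by simpa using hv.apply_eq_smul, ?_⟩
  rw [complexSpectralRadius, ← hnorm]
  simp

end LinftyNorm

lemma le_complexSpectralRadius_of_smul_le_mulVec (hB : ∀ i j, 0 ≤ B i j) {z : ι → ℝ}
    (hz : 0 ≤ z) (hz0 : z ≠ 0) {c : ℝ} (h : c • z ≤ B *ᵥ z) : c ≤ complexSpectralRadius B := by
  rcases lt_or_ge c 0 with hc | hc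
  · exact hc.le.trans (complexSpectralRadius_nonneg B)
  obtain ⟨i, hi⟩ := Function.ne_iff.1 hz0
  have hzi : 0 < z i := (hz i).lt_of_ne' hi
  have : Nonempty ι := ⟨i⟩
  have hpow : ∀ n : ℕ, c ^ n • z ≤ B ^ n *ᵥ z := by
    intro n
    induction n with
    | zero => simp
    | succ n ih =>
      calc c ^ (n + 1) • z = c ^ n • (c • z) := by rw [pow_succ, mul_smul]
        _ ≤ c ^ n • (B *ᵥ z) := smul_le_smul_of_nonneg_left h (pow_nonneg hc n)
        _ = B *ᵥ (c ^ n • z) := (mulVec_smul B _ z).symm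
        _ ≤ B *ᵥ (B ^ n *ᵥ z) := mulVec_mono hB ih
        _ = B ^ (n + 1) *ᵥ z := by rw [mulVec_mulVec, pow_succ']
  have hsum : 0 < ∑ k, z k :=
    hzi.trans_le (Finset.single_le_sum (fun k _ => hz k) (Finset.mem_univ i))
  have hbound : ∀ n, c ^ n ≤ (∑ k, z k) / z i * ∑ i, ∑ j, (B ^ n) i j := fun n => by
    rw [div_mul_eq_mul_div, le_div_iff₀ hzi]
    exact (hpow n i).trans (mulVec_apply_le_sum_mul_sum (pow_apply_nonneg hB n) hz i)
  have hroot : limsup (fun n : ℕ => (c ^ n) ^ (1 / (n : ℝ))) atTop = c :=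
    (tendsto_const_nhds.congr' <| (eventually_ne_atTop 0).mono fun n hn => by
      rw [one_div, Real.pow_rpow_inv_natCast hc hn]).limsup_eq
  rw [← hroot]
  exact limsup_rpow_one_div_le_of_le_const_mul (fun n => pow_nonneg hc n) (div_pos hsum hzi)
    hbound (tendsto_sum_pow_apply_rpow hB)

lemma le_complexSpectralRadius_of_mulVec_eq_smul (hB : ∀ i j, 0 ≤ B i j) {w : ι → ℝ}
    (hw : w ≠ 0) {r : ℝ} (h : B *ᵥ w = r • w) : r ≤ complexSpectralRadius B := by
  have hnorm := norm_smul_le_mulVec_norm (𝕜 := ℝ) hB (v := w) (z := r) (by simpa using h)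
  refine (le_abs_self r).trans (le_complexSpectralRadius_of_smul_le_mulVec hB
    (fun i => norm_nonneg _) (fun h0 => hw (funext fun i => ?_)) hnorm)
  simpa using congrFun h0 i

lemma exists_sum_range_pow_pos (hB : ∀ i j, 0 ≤ B i j) (hirr : ∀ i j, ∃ n, 0 < (B ^ n) i j) :
    ∃ K, ∀ i j, 0 < (∑ n ∈ Finset.range K, B ^ n) i j := by
  choose N hN using hirr
  refine ⟨∑ i, ∑ j, N i j + 1, fun i j => ?_⟩
  rw [Matrix.sum_apply]
  exact Finset.sum_pos' (fun n _ => pow_apply_nonneg hB n i j) ⟨N i j, Finset.mem_range.2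
    (Nat.lt_succ_of_le (single_le_sum_sum (fun _ _ => Nat.zero_le _) i j)), hN i j⟩

theorem exists_mulVec_eq_complexSpectralRadius_smul [Nonempty ι] (hB : ∀ i j, 0 ≤ B i j)
    (hirr : ∀ i j, ∃ n, 0 < (B ^ n) i j) :
    ∃ x : ι → ℝ, x ≠ 0 ∧ B *ᵥ x = complexSpectralRadius B • x := by
  set ρ := complexSpectralRadius B
  obtain ⟨z, v, hv0, hv, hz⟩ := exists_mulVec_eq_smul_norm_eq_complexSpectralRadius B
  set x : ι → ℝ := fun i => ‖v i‖
  have hx : 0 ≤ x := fun i => norm_nonneg _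
  have hx0 : x ≠ 0 := fun h => hv0 (funext fun i => norm_eq_zero.1 (congrFun h i))
  have hρx : ρ • x ≤ B *ᵥ x := by simpa only [hz] using norm_smul_le_mulVec_norm hB hv
  refine ⟨x, hx0, ?_⟩
  by_contra hne
  set y := B *ᵥ x - ρ • x
  obtain ⟨K, hP⟩ := exists_sum_range_pow_pos hB hirr
  set P := ∑ n ∈ Finset.range K, B ^ n
  have hPx := mulVec_apply_pos hP hx hx0
  have hPy := mulVec_apply_pos hP (sub_nonneg.2 hρx) (sub_ne_zero.2 hne)
  have hBP : B *ᵥ (P *ᵥ x) = ρ • (P *ᵥ x) + P *ᵥ y := by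
    have hcomm : B * P = P * B := (Commute.sum_right _ _ _ fun n _ => Commute.self_pow B n).eq
    rw [mulVec_mulVec, hcomm, ← mulVec_mulVec, mulVec_sub, mulVec_smul]
    abel
  obtain ⟨ε, hε, hεle⟩ := exists_pos_smul_le (P *ᵥ x) hPy
  have hle := le_complexSpectralRadius_of_smul_le_mulVec hB (fun i => (hPx i).le)
    (fun h => (hPx (Classical.arbitrary ι)).ne' (congrFun h _)) (c := ρ + ε)
    (by rw [hBP, add_smul]; exact add_le_add_right hεle _)
  linarith

lemma exists_sum_pow_apply_le_mul_pow_add_apply (hB : ∀ i j, 0 ≤ B i j)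
    (hirr : ∀ i j, ∃ n, 0 < (B ^ n) i j) (s t : ι) :
    ∃ (C : ℝ) (K : ℕ), 0 < C ∧
      ∀ n, ∃ k ≤ K, ∑ i, ∑ j, (B ^ n) i j ≤ C * (B ^ (n + k)) s t := by
  have : Nonempty ι := ⟨s⟩
  choose P hP using hirr s
  choose Q hQ using fun j => hirr j t
  -- The largest entry `(i, j)` of `B ^ n` is routed along the fixed paths `s → i` and `j → t`.
  set m : ι → ι → ℝ := fun i j => (B ^ P i) s i * (B ^ Q j) j t
  have hm : ∀ i j, 0 < m i j := fun i j => mul_pos (hP i) (hQ j)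
  set S := ∑ i, ∑ j, (m i j)⁻¹
  have hS : ∀ i j, (m i j)⁻¹ ≤ S := single_le_sum_sum fun i j => (inv_pos.2 (hm i j)).le
  have hSpos : 0 < S := (inv_pos.2 (hm s s)).trans_le (hS s s)
  refine ⟨Fintype.card ι ^ 2 * S, ∑ i, P i + ∑ j, Q j, by positivity, fun n => ?_⟩
  obtain ⟨⟨i, j⟩, -, hmax⟩ := Finset.exists_max_image Finset.univ
    (fun p : ι × ι => (B ^ n) p.1 p.2) Finset.univ_nonempty
  refine ⟨P i + Q j, add_le_add (Finset.single_le_sum (fun _ _ => Nat.zero_le _)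
    (Finset.mem_univ i)) (Finset.single_le_sum (fun _ _ => Nat.zero_le _) (Finset.mem_univ j)), ?_⟩
  have hpath : m i j * (B ^ n) i j ≤ (B ^ (n + (P i + Q j))) s t := by
    calc m i j * (B ^ n) i j = (B ^ P i) s i * (B ^ n) i j * (B ^ Q j) j t := by ring
      _ ≤ (B ^ (P i + n)) s j * (B ^ Q j) j t := mul_le_mul_of_nonneg_right
          (pow_apply_mul_pow_apply_le hB _ _ _ _ _) (pow_apply_nonneg hB _ _ _)
      _ ≤ (B ^ (P i + n + Q j)) s t := pow_apply_mul_pow_apply_le hB _ _ _ _ _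
      _ = (B ^ (n + (P i + Q j))) s t := by ring_nf
  calc ∑ i, ∑ j, (B ^ n) i j ≤ ∑ _i : ι, ∑ _j : ι, (B ^ n) i j :=
        Finset.sum_le_sum fun k _ => Finset.sum_le_sum fun l _ => hmax (k, l) (Finset.mem_univ _)
    _ = Fintype.card ι ^ 2 * (m i j)⁻¹ * (m i j * (B ^ n) i j) := by
        rw [mul_assoc _ (m i j)⁻¹, inv_mul_cancel_left₀ (hm i j).ne']; simp [sq, mul_assoc]
    _ ≤ Fintype.card ι ^ 2 * S * (B ^ (n + (P i + Q j))) s t :=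
        mul_le_mul (mul_le_mul_of_nonneg_left (hS i j) (by positivity)) hpath
          (mul_nonneg (hm i j).le (pow_apply_nonneg hB _ _ _)) (by positivity)

theorem limsup_pow_mulVec_apply_rpow (hB : ∀ i j, 0 ≤ B i j)
    (hirr : ∀ i j, ∃ n, 0 < (B ^ n) i j) {v : ι → ℝ} (hv : 0 ≤ v) (hv0 : v ≠ 0) (s : ι) :
    limsup (fun n : ℕ => (B ^ n *ᵥ v) s ^ (1 / (n : ℝ))) atTop = complexSpectralRadius B := by
  have : Nonempty ι := ⟨s⟩
  obtain ⟨t, ht⟩ := Function.ne_iff.1 hv0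
  have hvt : 0 < v t := (hv t).lt_of_ne' ht
  have hentry : ∀ n, (B ^ n) s t * v t ≤ (B ^ n *ᵥ v) s := fun n =>
    Finset.single_le_sum (f := fun j => (B ^ n) s j * v j)
      (fun j _ => mul_nonneg (pow_apply_nonneg hB n s j) (hv j)) (Finset.mem_univ t)
  obtain ⟨C, K, hC, hshift⟩ := exists_sum_pow_apply_le_mul_pow_add_apply hB hirr s t
  refine limsup_rpow_one_div_eq_of_comparable (K := K)
    (fun n => Finset.sum_nonneg fun j _ => mul_nonneg (pow_apply_nonneg hB n s j) (hv j))
    (hvt.trans_le (Finset.single_le_sum (fun k _ => hv k) (Finset.mem_univ t)))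
    (fun n => mulVec_apply_le_sum_mul_sum (pow_apply_nonneg hB n) hv s) (div_pos hC hvt)
    (fun n => ?_) (tendsto_sum_pow_apply_rpow hB)
  obtain ⟨k, hk, hle⟩ := hshift n
  refine ⟨k, hk, hle.trans ?_⟩
  rw [div_mul_eq_mul_div, le_div_iff₀ hvt, mul_assoc]
  exact mul_le_mul_of_nonneg_left (hentry (n + k)) hC.le

end Matrix

lemma List.ncard_length_eq_succ {α : Type*} [Fintype α] (S : Set (List α)) (n : ℕ) :
    {w ∈ S | w.length = n + 1}.ncard = ∑ a, {w | a :: w ∈ S ∧ w.length = n}.ncard := by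
  have : ∀ a : α, Finite {w | a :: w ∈ S ∧ w.length = n} := fun a =>
    ((List.finite_length_eq α n).subset fun w hw => hw.2).to_subtype
  let e : {w ∈ S | w.length = n + 1} ≃ Σ a, {w | a :: w ∈ S ∧ w.length = n} :=
    { toFun := fun w => ⟨w.1.head (List.ne_nil_of_length_eq_add_one w.2.2), w.1.tail,
        by rw [List.cons_head_tail]; exact w.2.1, by simp [w.2.2]⟩
      invFun := fun p => ⟨p.1 :: p.2.1, p.2.2.1, by simp [p.2.2.2]⟩
      left_inv := fun w => Subtype.ext (List.cons_head_tail _)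
      right_inv := fun p => rfl }
  rw [← Nat.card_coe_set_eq, Nat.card_congr e, Nat.card_sigma]
  simp only [Nat.card_coe_set_eq]

namespace DFA

variable {α σ : Type*} (M : DFA α σ)

lemma evalFrom_of_isAbsorbing {s : σ} (hs : IsAbsorbing M s) (w : List α) :
    M.evalFrom s w = s := by
  induction w with
  | nil => rfl
  | cons a w ih => rw [evalFrom_cons, hs a, ih]

lemma eq_of_reaches_of_isAbsorbing {s t : σ} (hs : IsAbsorbing M s) (h : Reaches M s t) :
    t = s := by
  induction h with
  | refl => rfl
  | tail _ hstep ih => obtain ⟨a, rfl⟩ := hstep; rw [ih]; exact hs a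

noncomputable def acceptCount (n : ℕ) (s : σ) : ℕ :=
  {w ∈ M.acceptsFrom s | w.length = n}.ncard

lemma acceptCount_succ [Fintype α] (n : ℕ) (s : σ) :
    M.acceptCount (n + 1) s = ∑ a, M.acceptCount n (M.step s a) :=
  List.ncard_length_eq_succ _ n

lemma acceptCount_zero_pos [Finite α] {s : σ} (hs : s ∈ M.accept) : 0 < M.acceptCount 0 s :=
  (Set.ncard_pos ((List.finite_length_eq α 0).subset fun _ hw => hw.2)).2 ⟨[], hs, rfl⟩

lemma acceptCount_of_isAbsorbing {s : σ} (hs : IsAbsorbing M s) (hrej : s ∉ M.accept) (n : ℕ) :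
    M.acceptCount n s = 0 := by
  have hempty : {w ∈ M.acceptsFrom s | w.length = n} = ∅ :=
    Set.eq_empty_of_forall_notMem fun w hw => hrej <| by
      simpa [mem_acceptsFrom, M.evalFrom_of_isAbsorbing hs] using hw.1
  rw [acceptCount, hempty, Set.ncard_empty]

lemma sum_comp_step [Fintype α] [Fintype σ] (f : σ → ℝ) (s : σ) :
    ∑ a, f (M.step s a) = ∑ t, ({a | M.step s a = t}.ncard : ℝ) * f t := by
  classical
  rw [← Finset.sum_fiberwise Finset.univ (M.step s)]
  refine Finset.sum_congr rfl fun t _ => ?_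
  rw [Finset.sum_congr rfl fun a ha => by rw [(Finset.mem_filter.1 ha).2], Finset.sum_const,
    nsmul_eq_mul, Set.ncard_eq_toFinset_card']
  simp

variable [Fintype σ] [DecidableEq σ] {sabs : σ}
  {R : Matrix {s : σ // s ≠ sabs} {s : σ // s ≠ sabs} ℝ}

theorem acceptCount_eq_pow_mulVec [Fintype α] (habs : IsAbsorbing M sabs)
    (hrej : sabs ∉ M.accept) (hR : ∀ s t, R s t = ({x | M.step s.1 x = t.1}.ncard : ℝ))
    (n : ℕ) (s : {s : σ // s ≠ sabs}) :
    (M.acceptCount n s : ℝ) = (R ^ n *ᵥ fun t => (M.acceptCount 0 t : ℝ)) s := by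
  induction n generalizing s with
  | zero => simp
  | succ n ih =>
    calc (M.acceptCount (n + 1) s : ℝ) = ∑ a, (M.acceptCount n (M.step s a) : ℝ) := by
          rw [acceptCount_succ]; push_cast; rfl
      _ = ∑ t, ({a | M.step s a = t}.ncard : ℝ) * M.acceptCount n t :=
          M.sum_comp_step (fun t => (M.acceptCount n t : ℝ)) s
      _ = ∑ t : {t // t ≠ sabs}, R s t * M.acceptCount n t := by
          rw [Fintype.sum_eq_add_sum_subtype_ne _ sabs, M.acceptCount_of_isAbsorbing habs hrej]
          simp [hR]
      _ = (R ^ (n + 1) *ᵥ fun t => (M.acceptCount 0 t : ℝ)) s := by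
          rw [pow_succ', ← mulVec_mulVec]
          simp only [ih]
          rfl

theorem exists_pow_pos_of_reaches [Finite α] (habs : IsAbsorbing M sabs)
    (hR : ∀ s t, R s t = ({x | M.step s.1 x = t.1}.ncard : ℝ)) {s t : {s : σ // s ≠ sabs}}
    (h : Reaches M s t) : ∃ n, 0 < (R ^ n) s t := by
  have hRnn : ∀ s t, 0 ≤ R s t := fun s t => by rw [hR]; positivity
  suffices ∀ s : σ, Reaches M s t → ∀ hs : s ≠ sabs, ∃ n, 0 < (R ^ n) ⟨s, hs⟩ t from
    this s h s.2
  intro s h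
  induction h using Relation.ReflTransGen.head_induction_on with
  | refl => exact fun _ => ⟨0, by simp⟩
  | @head s u hstep hrest ih =>
    intro hs
    obtain ⟨a, rfl⟩ := hstep
    have hu : M.step s a ≠ sabs := fun hu => t.2 (M.eq_of_reaches_of_isAbsorbing habs (hu ▸ hrest))
    obtain ⟨n, hn⟩ := ih hu
    have hRsu : 0 < R ⟨s, hs⟩ ⟨M.step s a, hu⟩ := by
      have hne : {x | M.step s x = M.step s a}.Nonempty := ⟨a, rfl⟩
      rw [hR]
      exact_mod_cast (Set.ncard_pos (Set.toFinite _)).2 hne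
    exact ⟨1 + n, (mul_pos (by rw [pow_one]; exact hRsu) hn).trans_le
      (Matrix.pow_apply_mul_pow_apply_le hRnn 1 n _ _ _)⟩

end DFA

/-- for a DFA all of whose states are reachable, with a unique absorbing
rejecting state `sabs` and remaining states a single strongly connected component
containing an accepting state, the growth rate of the accepted language equals the
largest real eigenvalue (spectral radius) of the reduced matrix `R` on the
non-absorbing states, where `R s s'` counts the symbols carrying `s` to `s'`. -/
theorem growthRate_eq_spectralRadius_reducedMatrix
    {V : Type*} [Fintype V]
    (σ : Type) [Fintype σ] [DecidableEq σ] (M : DFA V σ) (sabs : σ)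
    (hreach : ∀ s : σ, Reaches M M.start s)
    (habs : ∀ s : σ, IsAbsorbing M s ↔ s = sabs)
    (hrej : sabs ∉ M.accept)
    (hconn : ∀ s t : σ, s ≠ sabs → t ≠ sabs → Reaches M s t)
    (hacc : ∃ s ∈ M.accept, s ≠ sabs)
    (R : Matrix {s : σ // s ≠ sabs} {s : σ // s ≠ sabs} ℝ)
    (hR : ∀ s s' : {s : σ // s ≠ sabs},
      R s s' = (Set.ncard {x : V | M.step s.1 x = s'.1} : ℝ)) :
    growthRate M.accepts
      = sSup {r : ℝ | ∃ w : {s : σ // s ≠ sabs} → ℝ, w ≠ 0 ∧ R.mulVec w = r • w} := by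
  have hsabs : IsAbsorbing M sabs := (habs sabs).2 rfl
  obtain ⟨t₀, ht₀, ht₀abs⟩ := hacc
  have hstart : M.start ≠ sabs := fun h =>
    ht₀abs (M.eq_of_reaches_of_isAbsorbing hsabs (h ▸ hreach t₀))
  have : Nonempty {s : σ // s ≠ sabs} := ⟨⟨M.start, hstart⟩⟩
  have hRnn : ∀ s t, 0 ≤ R s t := fun s t => by rw [hR]; positivity
  have hirr : ∀ s t, ∃ n, 0 < (R ^ n) s t := fun s t =>
    M.exists_pow_pos_of_reaches hsabs hR (hconn s t s.2 t.2)
  have hρ : sSup {r : ℝ | ∃ w : {s : σ // s ≠ sabs} → ℝ, w ≠ 0 ∧ R.mulVec w = r • w}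
      = R.complexSpectralRadius := by
    obtain ⟨x, hx0, hx⟩ := Matrix.exists_mulVec_eq_complexSpectralRadius_smul hRnn hirr
    exact IsGreatest.csSup_eq ⟨⟨x, hx0, hx⟩, fun r ⟨w, hw0, hw⟩ =>
      Matrix.le_complexSpectralRadius_of_mulVec_eq_smul hRnn hw0 hw⟩
  have hv0 : (fun t : {s : σ // s ≠ sabs} => (M.acceptCount 0 t : ℝ)) ≠ 0 :=
    Function.ne_iff.2 ⟨⟨t₀, ht₀abs⟩, by simpa using (M.acceptCount_zero_pos ht₀).ne'⟩
  rw [hρ, ← Matrix.limsup_pow_mulVec_apply_rpow hRnn hirr (fun t => by positivity) hv0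
    ⟨M.start, hstart⟩]
  refine congrArg (limsup · atTop) (funext fun n => ?_)
  rw [← M.acceptCount_eq_pow_mulVec hsabs hrej hR]
  rfl
end

section
/- For finite simple graphs G and H, the reversible capacity is supermultiplicative under the strong graph product: Θ_REV(G ⊠ H) ≥ Θ_REV(G) · Θ_REV(H). -/
open Filter

/-- A reversible partial DFA: each symbol's partial transition function is injective
on its domain. -/
structure RevPartialDFA (α : Type*) where
  /-- the (finite) state space -/
  σ : Type
  /-- the state space is finite -/
  fintype : Fintype σ
  /-- partial transition function -/
  step : σ → α → Option σ
  /-- initial state -/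
  start : σ
  /-- accepting states -/
  accept : Set σ
  /-- reversibility: transitions by a fixed symbol are injective where defined -/
  reversible : ∀ (a : α) (x y q : σ), step x a = some q → step y a = some q → x = y

/-- The partial evaluation of a reversible partial DFA on a word (`none` if any
transition along the word is undefined). -/
def RevPartialDFA.eval {α : Type*} (M : RevPartialDFA α) (w : List α) : Option M.σ :=
  w.foldl (fun os a => os.bind fun s => M.step s a) (some M.start)

/-- The language accepted by a reversible partial DFA: all transitions defined and the
final state accepting. -/
def RevPartialDFA.accepts {α : Type*} (M : RevPartialDFA α) : Set (List α) :=
  {w | ∃ s ∈ M.accept, M.eval w = some s}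

/-- The reversible capacity `Θ_REV(G)`: the supremum of growth rates over reversible
partial DFAs whose accepted language is distinguishable for `G`. -/
noncomputable def revCapacity {V : Type*} (G : SimpleGraph V) : ℝ :=
  sSup {r : ℝ |
    ∃ M : RevPartialDFA V, Distinguishable G M.accepts ∧ growthRate M.accepts = r}

/-- The strong product of two simple graphs. -/
def strongProd {V W : Type*} (G : SimpleGraph V) (H : SimpleGraph W) :
    SimpleGraph (V × W) where
  Adj x y := x ≠ y ∧ (x.1 = y.1 ∨ G.Adj x.1 y.1) ∧ (x.2 = y.2 ∨ H.Adj x.2 y.2)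
  symm := by
    constructor
    rintro x y ⟨h1, h2, h3⟩
    exact ⟨h1.symm, h2.imp Eq.symm (fun h => h.symm), h3.imp Eq.symm (fun h => h.symm)⟩
  loopless := by constructor; rintro x ⟨h1, -⟩; exact h1 rfl


/-!
Given automata for `G` and `H` whose growth rates exceed `u` and `v`, pigeonholing over the
finitely many states gives, for some length `m` and accepting state `s`, more than `u ^ m` words of
length `m` leading from the start to `s`. Sending `s` back to the start after every `m` letters
gives a reversible automaton accepting exactly the Kleene star of these blocks: its language is
still distinguishable and has at least `u ^ (k * m)` words of length `k * m`. Running the two loop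
automata side by side on pairs of letters gives a reversible automaton for `G ⊠ H` whose language
is distinguishable and has at least `(u * v) ^ l` words of every length `l` divisible by `m * n`,
so its growth rate is at least `u * v`.
-/

section

open scoped Computability

variable {α β V W : Type*}

theorem le_rpow_one_div_iff {c x : ℝ} {n : ℕ} (hc : 0 ≤ c) (hx : 0 ≤ x) (hn : n ≠ 0) :
    c ≤ x ^ (1 / (n : ℝ)) ↔ c ^ n ≤ x := by
  rw [one_div, Real.le_rpow_inv_iff_of_pos hc hx (by positivity), Real.rpow_natCast]

theorem lt_rpow_one_div_iff {c x : ℝ} {n : ℕ} (hc : 0 ≤ c) (hx : 0 ≤ x) (hn : n ≠ 0) :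
    c < x ^ (1 / (n : ℝ)) ↔ c ^ n < x := by
  rw [one_div, Real.lt_rpow_inv_iff_of_pos hc hx (by positivity), Real.rpow_natCast]

def lengthSlice (L : Set (List α)) (n : ℕ) : Set (List α) := {w ∈ L | w.length = n}

theorem finite_lengthSlice [Finite α] (L : Set (List α)) (n : ℕ) : (lengthSlice L n).Finite :=
  (List.finite_length_eq α n).subset fun _ hw => hw.2

theorem ncard_lengthSlice_le [Fintype α] (L : Set (List α)) (n : ℕ) :
    (lengthSlice L n).ncard ≤ Fintype.card α ^ n :=
  calc (lengthSlice L n).ncard ≤ {w : List α | w.length = n}.ncard :=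
        Set.ncard_le_ncard (fun _ hw => hw.2) (List.finite_length_eq α n)
    _ = Nat.card (List.Vector α n) := (Nat.card_coe_set_eq _).symm
    _ = Fintype.card α ^ n := by rw [Nat.card_eq_fintype_card, card_vector]

theorem rpow_ncard_lengthSlice_le [Fintype α] (L : Set (List α)) (n : ℕ) :
    ((lengthSlice L n).ncard : ℝ) ^ (1 / (n : ℝ)) ≤ Fintype.card α + 1 := by
  rcases eq_or_ne n 0 with rfl | hn
  · simp
  calc ((lengthSlice L n).ncard : ℝ) ^ (1 / (n : ℝ)) ≤ Fintype.card α := by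
        rw [one_div, Real.rpow_inv_le_iff_of_pos (by positivity) (by positivity) (by positivity),
          Real.rpow_natCast]
        exact_mod_cast ncard_lengthSlice_le L n
    _ ≤ Fintype.card α + 1 := le_add_of_nonneg_right zero_le_one

theorem isCoboundedUnder_growth (L : Set (List α)) :
    IsCoboundedUnder (· ≤ ·) atTop
      (fun n : ℕ => ((lengthSlice L n).ncard : ℝ) ^ (1 / (n : ℝ))) :=
  (isBoundedUnder_of ⟨0, fun _ => by positivity⟩).isCoboundedUnder_le

theorem isBoundedUnder_growth [Fintype α] (L : Set (List α)) :
    IsBoundedUnder (· ≤ ·) atTop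
      (fun n : ℕ => ((lengthSlice L n).ncard : ℝ) ^ (1 / (n : ℝ))) :=
  isBoundedUnder_of ⟨_, rpow_ncard_lengthSlice_le L⟩

theorem growthRate_le [Fintype α] (L : Set (List α)) : growthRate L ≤ Fintype.card α + 1 :=
  limsup_le_of_le (isCoboundedUnder_growth L) (.of_forall (rpow_ncard_lengthSlice_le L))

theorem le_growthRate_of_frequently [Fintype α] {L : Set (List α)} {c : ℝ} (hc : 0 ≤ c)
    (h : ∃ᶠ n in atTop, c ^ n ≤ (lengthSlice L n).ncard) : c ≤ growthRate L :=
  le_limsup_of_frequently_le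
    ((h.and_eventually (eventually_ne_atTop 0)).mono fun _ ⟨hn, hn0⟩ =>
      (le_rpow_one_div_iff hc (Nat.cast_nonneg _) hn0).2 hn)
    (isBoundedUnder_growth L)

theorem growthRate_nonneg [Fintype α] (L : Set (List α)) : 0 ≤ growthRate L :=
  le_growthRate_of_frequently le_rfl <| (eventually_ne_atTop 0).frequently.mono fun n hn => by
    rw [zero_pow hn]; positivity

theorem frequently_pow_lt_of_lt_growthRate {L : Set (List α)} {c : ℝ} (hc : 0 ≤ c)
    (h : c < growthRate L) : ∃ᶠ n in atTop, c ^ n < (lengthSlice L n).ncard :=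
  ((frequently_lt_of_lt_limsup (isCoboundedUnder_growth L) h).and_eventually
    (eventually_ne_atTop 0)).mono fun _ ⟨hn, hn0⟩ =>
      (lt_rpow_one_div_iff hc (Nat.cast_nonneg _) hn0).1 hn

def Separated (G : SimpleGraph V) (x y : List V) : Prop :=
  ∃ (i : ℕ) (hx : i < x.length) (hy : i < y.length), x[i] ≠ y[i] ∧ ¬ G.Adj x[i] y[i]

namespace Separated

variable {G : SimpleGraph V} {H : SimpleGraph W}

theorem append_left {x y : List V} (h : Separated G x y) (u : List V) :
    Separated G (u ++ x) (u ++ y) := by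
  obtain ⟨i, hx, hy, hne, hadj⟩ := h
  refine ⟨u.length + i, by simpa, by simpa, ?_⟩
  simpa [List.getElem_append_right] using ⟨hne, hadj⟩

theorem append_right {x y : List V} (h : Separated G x y) (x' y' : List V) :
    Separated G (x ++ x') (y ++ y') := by
  obtain ⟨i, hx, hy, hne, hadj⟩ := h
  refine ⟨i, by simp; omega, by simp; omega, ?_⟩
  simpa [List.getElem_append_left hx, List.getElem_append_left hy] using ⟨hne, hadj⟩

theorem of_map_fst {x y : List (V × W)} (h : Separated G (x.map Prod.fst) (y.map Prod.fst)) :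
    Separated (strongProd G H) x y := by
  obtain ⟨i, hx, hy, hne, hadj⟩ := h
  simp only [List.getElem_map] at hne hadj
  refine ⟨i, by simpa using hx, by simpa using hy, fun h => hne (congrArg Prod.fst h), ?_⟩
  rintro ⟨-, h | h, -⟩ <;> contradiction

theorem of_map_snd {x y : List (V × W)} (h : Separated H (x.map Prod.snd) (y.map Prod.snd)) :
    Separated (strongProd G H) x y := by
  obtain ⟨i, hx, hy, hne, hadj⟩ := h
  simp only [List.getElem_map] at hne hadj
  refine ⟨i, by simpa using hx, by simpa using hy, fun h => hne (congrArg Prod.snd h), ?_⟩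
  rintro ⟨-, -, h | h⟩ <;> contradiction

end Separated

namespace Distinguishable

variable {G : SimpleGraph V}

theorem mono {L A : Set (List V)} (hL : Distinguishable G L) (hA : A ⊆ L) :
    Distinguishable G A :=
  fun x hx y hy => hL x (hA hx) y (hA hy)

theorem kstar_s10 {A : Language V} {m : ℕ} (hA : Distinguishable G A)
    (hm : ∀ w ∈ A, w.length = m) : Distinguishable G (A∗ : Language V) := by
  suffices key : ∀ bs cs : List (List V), (∀ b ∈ bs, b ∈ A) → (∀ c ∈ cs, c ∈ A) →
      bs.flatten.length = cs.flatten.length → bs.flatten ≠ cs.flatten →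
      Separated G bs.flatten cs.flatten by
    intro x hx y hy hlen hne
    obtain ⟨bs, rfl, hbs⟩ := Language.mem_kstar.1 hx
    obtain ⟨cs, rfl, hcs⟩ := Language.mem_kstar.1 hy
    exact key bs cs hbs hcs hlen hne
  intro bs
  induction bs with
  | nil =>
    intro cs _ _ hlen hne
    exact absurd (List.eq_nil_of_length_eq_zero hlen.symm).symm hne
  | cons b bs ih =>
    rintro (_ | ⟨c, cs⟩) hbs hcs hlen hne
    · exact absurd (List.eq_nil_of_length_eq_zero hlen) hne
    simp only [List.flatten_cons, List.mem_cons, forall_eq_or_imp] at hbs hcs hlen hne ⊢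
    by_cases hbc : b = c
    · subst hbc
      exact (ih cs hbs.2 hcs.2 (by simpa using hlen) (by simpa using hne)).append_left b
    · exact Separated.append_right (hA b hbs.1 c hcs.1 (by rw [hm b hbs.1, hm c hcs.1]) hbc) _ _

theorem prod {H : SimpleGraph W} {L₁ : Set (List V)} {L₂ : Set (List W)}
    (h₁ : Distinguishable G L₁) (h₂ : Distinguishable H L₂) :
    Distinguishable (strongProd G H) {w | w.map Prod.fst ∈ L₁ ∧ w.map Prod.snd ∈ L₂} := by
  intro x hx y hy hlen hne
  by_cases hfst : x.map Prod.fst = y.map Prod.fst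
  · refine Separated.of_map_snd (h₂ _ hx.2 _ hy.2 (by simpa using hlen) fun hsnd => hne ?_)
    rw [← List.zip_unzip x, ← List.zip_unzip y]
    simp [hfst, hsnd]
  · exact Separated.of_map_fst (h₁ _ hx.1 _ hy.1 (by simpa using hlen) hfst)

end Distinguishable

theorem ncard_lengthSlice_prod (L₁ : Set (List α)) (L₂ : Set (List β)) (n : ℕ) :
    (lengthSlice {w | w.map Prod.fst ∈ L₁ ∧ w.map Prod.snd ∈ L₂} n).ncard =
      (lengthSlice L₁ n).ncard * (lengthSlice L₂ n).ncard := by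
  have hinj : Function.Injective (List.unzip : List (α × β) → List α × List β) :=
    Function.LeftInverse.injective (g := fun p => p.1.zip p.2) fun w => List.zip_unzip w
  rw [← Set.ncard_prod, ← Set.ncard_image_of_injective _ hinj]
  congr 1
  ext ⟨u, v⟩
  simp only [lengthSlice, Set.mem_image, Set.mem_prod, Set.mem_ofPred_eq, List.unzip_eq_map,
    Prod.mk.injEq]
  constructor
  · rintro ⟨w, ⟨⟨h₁, h₂⟩, hn⟩, rfl, rfl⟩
    simp_all
  · rintro ⟨⟨hu, hun⟩, hv, hvn⟩
    refine ⟨u.zip v, ?_, ?_, ?_⟩ <;> simp_all [List.map_fst_zip, List.map_snd_zip]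

theorem ncard_image2_append {S A : Set (List α)} {p : ℕ} (hS : ∀ w ∈ S, w.length = p) :
    (Set.image2 (· ++ ·) S A).ncard = S.ncard * A.ncard := by
  rw [← Set.image_uncurry_prod, Set.InjOn.ncard_image, Set.ncard_prod]
  rintro ⟨w, b⟩ ⟨hw, -⟩ ⟨w', b'⟩ ⟨hw', -⟩ h
  obtain ⟨rfl, rfl⟩ := List.append_inj h ((hS w hw).trans (hS w' hw').symm)
  rfl

theorem pow_ncard_le_ncard_lengthSlice_kstar [Finite α] {A : Language α} {m : ℕ}
    (hA : ∀ w ∈ A, w.length = m) (k : ℕ) :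
    Set.ncard A ^ k ≤ (lengthSlice (A∗ : Language α) (k * m)).ncard := by
  induction k with
  | zero =>
    rw [pow_zero, zero_mul]
    exact (Set.ncard_pos (finite_lengthSlice _ 0)).2 ⟨[], Language.nil_mem_kstar A, rfl⟩
  | succ k ih =>
    calc Set.ncard A ^ (k + 1)
        ≤ (lengthSlice (A∗ : Language α) (k * m)).ncard * Set.ncard A := by
          rw [pow_succ]; exact Nat.mul_le_mul_right _ ih
      _ = (Set.image2 (· ++ ·) (lengthSlice (A∗ : Language α) (k * m)) A).ncard :=
          (ncard_image2_append fun _ hw => hw.2).symm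
      _ ≤ (lengthSlice (A∗ : Language α) ((k + 1) * m)).ncard := by
          refine Set.ncard_le_ncard ?_ (finite_lengthSlice _ _)
          rintro _ ⟨w, ⟨hw, hwl⟩, b, hb, rfl⟩
          obtain ⟨L, rfl, hL⟩ := Language.mem_kstar.1 hw
          refine ⟨?_, by simp [hwl, hA b hb, Nat.succ_mul]⟩
          have h := Language.join_mem_kstar (L := L ++ [b])
            (by simpa [or_imp, forall_and] using ⟨hL, hb⟩)
          rwa [List.flatten_append, List.flatten_singleton] at h

namespace RevPartialDFA

instance (M : RevPartialDFA α) : Fintype M.σ := M.fintype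

variable (M : RevPartialDFA α)

theorem eval_append_singleton (w : List α) (a : α) :
    M.eval (w ++ [a]) = (M.eval w).bind fun s => M.step s a :=
  List.foldl_append

theorem eval_append_of_eval_eq_start {x : List α} (hx : M.eval x = some M.start) (y : List α) :
    M.eval (x ++ y) = M.eval y := by
  induction y using List.reverseRecOn with
  | nil => rw [List.append_nil]; exact hx
  | append_singleton y a ih =>
    rw [← List.append_assoc, eval_append_singleton, ih, eval_append_singleton]

def wordsTo (s : M.σ) (m : ℕ) : Language α := {w | w.length = m ∧ M.eval w = some s}

theorem lengthSlice_accepts (n : ℕ) :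
    lengthSlice M.accepts n = ⋃ s ∈ M.accept, M.wordsTo s n := by
  ext w
  simp only [lengthSlice, accepts, wordsTo, Set.mem_iUnion, exists_prop]
  exact ⟨fun ⟨⟨s, hs, he⟩, hn⟩ => ⟨s, hs, hn, he⟩,
    fun ⟨s, hs, hn, he⟩ => ⟨⟨s, hs, he⟩, hn⟩⟩

theorem exists_pow_lt_ncard_wordsTo [Fintype α] {u : ℝ} (hu : 0 ≤ u)
    (h : u < growthRate M.accepts) :
    ∃ m, 0 < m ∧ ∃ s ∈ M.accept, u ^ m < Set.ncard (M.wordsTo s m) := by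
  classical
  obtain ⟨u', huu', hu'⟩ := exists_between h
  have hu'0 : 0 < u' := hu.trans_lt huu'
  set K := Fintype.card M.σ
  -- the `K` states cost a factor `K` in the count, which `(u' / u) ^ n` eventually beats
  have hK : ∀ᶠ n in atTop, K * u ^ n < u' ^ n := by
    have : Tendsto (fun n => (K : ℝ) * (u / u') ^ n) atTop (nhds 0) := by
      simpa using ((tendsto_pow_atTop_nhds_zero_of_lt_one (div_nonneg hu hu'0.le)
        ((div_lt_one hu'0).2 huu')).const_mul (K : ℝ))
    filter_upwards [this.eventually (gt_mem_nhds one_pos)] with n hn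
    rwa [div_pow, mul_div_assoc', div_lt_one (pow_pos hu'0 n)] at hn
  obtain ⟨m, hm, hKm, hm0⟩ := ((frequently_pow_lt_of_lt_growthRate hu'0.le hu').and_eventually
    (hK.and (eventually_ne_atTop 0))).exists
  obtain ⟨s, hs, hlt⟩ := Finset.exists_lt_of_sum_lt (s := M.accept.toFinset)
    (f := fun _ => u ^ m) (g := fun s => (Set.ncard (M.wordsTo s m) : ℝ)) <| by
    calc ∑ _ ∈ M.accept.toFinset, u ^ m ≤ K * u ^ m := by
          rw [Finset.sum_const, nsmul_eq_mul]
          gcongr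
          exact_mod_cast Finset.card_le_univ _
      _ < (lengthSlice M.accepts m).ncard := hKm.trans hm
      _ ≤ ∑ s ∈ M.accept.toFinset, (Set.ncard (M.wordsTo s m) : ℝ) := by
          rw [lengthSlice_accepts]
          exact_mod_cast (by simpa using Finset.set_ncard_biUnion_le M.accept.toFinset _)
  exact ⟨m, Nat.pos_of_ne_zero hm0, s, Set.mem_toFinset.1 hs, hlt⟩

def empty (α : Type*) : RevPartialDFA α where
  σ := Unit
  fintype := inferInstance
  step _ _ := none
  start := ()
  accept := ∅
  reversible _ _ _ _ h := nomatch h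

theorem distinguishable_empty (G : SimpleGraph V) : Distinguishable G (empty V).accepts :=
  fun _ ⟨_, hs, _⟩ => absurd hs (Set.notMem_empty _)

def prod (N : RevPartialDFA β) : RevPartialDFA (α × β) where
  σ := M.σ × N.σ
  fintype := inferInstance
  step p a := Option.map₂ Prod.mk (M.step p.1 a.1) (N.step p.2 a.2)
  start := (M.start, N.start)
  accept := M.accept ×ˢ N.accept
  reversible a x y r hx hy := by
    simp only [Option.map₂_eq_some_iff, Option.mem_def] at hx hy
    obtain ⟨p, q, hp, hq, rfl⟩ := hx
    obtain ⟨p', q', hp', hq', h⟩ := hy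
    obtain ⟨rfl, rfl⟩ := Prod.mk.inj h
    exact Prod.ext (M.reversible _ _ _ _ hp hp') (N.reversible _ _ _ _ hq hq')

theorem eval_prod (N : RevPartialDFA β) (w : List (α × β)) :
    (M.prod N).eval w =
      Option.map₂ Prod.mk (M.eval (w.map Prod.fst)) (N.eval (w.map Prod.snd)) := by
  induction w using List.reverseRecOn with
  | nil => rfl
  | append_singleton w a ih =>
    simp only [eval_append_singleton, List.map_append, List.map_singleton, ih]
    cases M.eval (w.map Prod.fst) <;> cases N.eval (w.map Prod.snd) <;> simp [prod]

theorem prod_accepts (N : RevPartialDFA β) :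
    (M.prod N).accepts = {w | w.map Prod.fst ∈ M.accepts ∧ w.map Prod.snd ∈ N.accepts} := by
  ext w
  simp only [accepts, eval_prod, Set.mem_ofPred_eq]
  simp only [prod, Option.map₂_eq_some_iff, Option.mem_def, Prod.exists, Prod.mk.injEq]
  constructor
  · rintro ⟨p, q, ⟨hp, hq⟩, _, _, hM, hN, rfl, rfl⟩
    exact ⟨⟨_, hp, hM⟩, _, hq, hN⟩
  · rintro ⟨⟨p, hp, hM⟩, q, hq, hN⟩
    exact ⟨p, q, ⟨hp, hq⟩, p, q, hM, hN, rfl, rfl⟩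

open Classical in
/-- The second component counts the letters read in the current block. A block may end only by
entering `s`, and that transition is redirected to the start; the counter keeps the redirected
transitions apart from genuine ones into `M.start`, so reversibility survives. -/
noncomputable def loop (s : M.σ) (m : ℕ) [NeZero m] : RevPartialDFA α where
  σ := M.σ × Fin m
  fintype := inferInstance
  step p a := (M.step p.1 a).bind fun q =>
    if h : p.2.val + 1 < m then some (q, ⟨p.2.val + 1, h⟩)
    else if q = s then some (M.start, 0) else none
  start := (M.start, 0)
  accept := {(M.start, 0)}
  reversible a x y r hx hy := by
    obtain ⟨q, hxq, hx⟩ := Option.bind_eq_some_iff.1 hx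
    obtain ⟨q', hyq, hy⟩ := Option.bind_eq_some_iff.1 hy
    obtain ⟨rfl, hxy⟩ : q = q' ∧ x.2 = y.2 := by
      split_ifs at hx hy <;> grind [Fin.ext_iff]
    exact Prod.ext (M.reversible a _ _ _ hxq hyq) hxy

variable {M} {s : M.σ} {m : ℕ} [NeZero m]

theorem eval_loop_of_length_lt {u : List α} (hu : u.length < m) :
    (M.loop s m).eval u = (M.eval u).map fun q => (q, ⟨u.length, hu⟩) := by
  induction u using List.reverseRecOn with
  | nil => simp [loop]; rfl
  | append_singleton u a ih =>
    have hu' : u.length + 1 < m := by simpa using hu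
    simp only [eval_append_singleton, ih (by omega)]
    cases M.eval u <;> simp [loop, hu', Option.map_eq_bind]

theorem eval_loop_of_mem_wordsTo {w : List α} (hw : w ∈ M.wordsTo s m) :
    (M.loop s m).eval w = some (M.loop s m).start := by
  obtain ⟨hlen, hs⟩ := hw
  rcases w.eq_nil_or_concat with rfl | ⟨u, a, rfl⟩
  · exact absurd hlen.symm (NeZero.ne m)
  simp only [List.concat_eq_append, List.length_append, List.length_singleton] at hlen hs ⊢
  rw [eval_append_singleton, eval_loop_of_length_lt (by omega)]
  obtain ⟨p, hp, hps⟩ := Option.bind_eq_some_iff.1 ((M.eval_append_singleton u a).symm.trans hs)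
  simp [hp, loop, hps, hlen]

theorem eval_loop_flatten {bs : List (List α)} (hbs : ∀ b ∈ bs, b ∈ M.wordsTo s m) :
    (M.loop s m).eval bs.flatten = some (M.loop s m).start := by
  induction bs with
  | nil => rfl
  | cons b bs ih =>
    simp only [List.mem_cons, forall_eq_or_imp] at hbs
    rw [List.flatten_cons, eval_append_of_eval_eq_start _ (eval_loop_of_mem_wordsTo hbs.1),
      ih hbs.2]

theorem exists_flatten_append_of_eval_loop {w : List α} {q : M.σ} {j : Fin m}
    (h : (M.loop s m).eval w = some (q, j)) :
    ∃ (bs : List (List α)) (u : List α), (∀ b ∈ bs, b ∈ M.wordsTo s m) ∧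
      w = bs.flatten ++ u ∧ u.length = j ∧ M.eval u = some q := by
  induction w using List.reverseRecOn generalizing q j with
  | nil =>
    obtain ⟨rfl, rfl⟩ := Prod.mk.inj (Option.some_inj.1 h)
    exact ⟨[], [], by simp, rfl, rfl, rfl⟩
  | append_singleton w a ih =>
    rw [eval_append_singleton] at h
    obtain ⟨⟨p, i⟩, hp, hstep⟩ := Option.bind_eq_some_iff.1 h
    obtain ⟨bs, u, hbs, rfl, hu, hup⟩ := ih hp
    obtain ⟨q', hq', hnext⟩ := Option.bind_eq_some_iff.1 hstep
    have hua : M.eval (u ++ [a]) = some q' := by rw [eval_append_singleton, hup]; exact hq'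
    split_ifs at hnext with hi hs
    · obtain ⟨rfl, rfl⟩ := Prod.mk.inj (Option.some_inj.1 hnext)
      exact ⟨bs, u ++ [a], hbs, by simp, by simp [hu], hua⟩
    · obtain ⟨rfl, rfl⟩ := Prod.mk.inj (Option.some_inj.1 hnext)
      subst hs
      refine ⟨bs ++ [u ++ [a]], [], ?_, by simp, rfl, rfl⟩
      simp only [List.mem_append, List.mem_singleton]
      rintro b (hb | rfl)
      · exact hbs b hb
      · refine ⟨?_, hua⟩
        simp only [List.length_append, List.length_singleton, hu] at hi ⊢
        omega

theorem loop_accepts : (M.loop s m).accepts = (M.wordsTo s m)∗ := by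
  ext w
  constructor
  · rintro ⟨_, rfl, hw⟩
    obtain ⟨bs, u, hbs, rfl, hu, -⟩ := exists_flatten_append_of_eval_loop hw
    rw [List.eq_nil_of_length_eq_zero hu, List.append_nil]
    exact Language.join_mem_kstar hbs
  · intro hw
    obtain ⟨bs, rfl, hbs⟩ := Language.mem_kstar.1 hw
    exact ⟨_, rfl, eval_loop_flatten hbs⟩

theorem distinguishable_loop {G : SimpleGraph α} (hM : Distinguishable G M.accepts)
    (hs : s ∈ M.accept) : Distinguishable G (M.loop s m).accepts := by
  rw [loop_accepts]
  exact (hM.mono fun _ hw => ⟨s, hs, hw.2⟩).kstar_s10 fun _ hw => hw.1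

theorem pow_le_ncard_lengthSlice_loop [Fintype α] {u : ℝ} (hu : 0 ≤ u)
    (hM : u ^ m ≤ Set.ncard (M.wordsTo s m)) (k : ℕ) :
    u ^ (k * m) ≤ (lengthSlice (M.loop s m).accepts (k * m)).ncard :=
  calc u ^ (k * m) = (u ^ m) ^ k := by rw [mul_comm, pow_mul]
    _ ≤ (Set.ncard (M.wordsTo s m) : ℝ) ^ k := by gcongr
    _ ≤ (lengthSlice (M.loop s m).accepts (k * m)).ncard := by
        rw [loop_accepts]
        exact_mod_cast pow_ncard_le_ncard_lengthSlice_kstar (A := M.wordsTo s m)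
          (fun _ hw => hw.1) k

theorem mul_le_growthRate_prod_loop [Fintype α] [Fintype β] {N : RevPartialDFA β} {t : N.σ}
    {n : ℕ} [NeZero n] {u v : ℝ} (hu : 0 ≤ u) (hv : 0 ≤ v)
    (hM : u ^ m ≤ Set.ncard (M.wordsTo s m)) (hN : v ^ n ≤ Set.ncard (N.wordsTo t n)) :
    u * v ≤ growthRate ((M.loop s m).prod (N.loop t n)).accepts := by
  refine le_growthRate_of_frequently (mul_nonneg hu hv) <| frequently_atTop.2 fun k =>
    ⟨k * n * m, ?_, ?_⟩
  · rw [mul_assoc]; exact Nat.le_mul_of_pos_right k (Nat.pos_of_neZero _)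
  rw [prod_accepts, ncard_lengthSlice_prod, Nat.cast_mul, mul_pow]
  have hN' := pow_le_ncard_lengthSlice_loop hv hN (k * m)
  rw [show k * m * n = k * n * m by ring] at hN'
  exact mul_le_mul (pow_le_ncard_lengthSlice_loop hu hM (k * n)) hN' (by positivity)
    (by positivity)

end RevPartialDFA

theorem growthRate_le_revCapacity [Fintype V] {G : SimpleGraph V} {M : RevPartialDFA V}
    (hM : Distinguishable G M.accepts) : growthRate M.accepts ≤ revCapacity G :=
  le_csSup ⟨_, by rintro _ ⟨M, -, rfl⟩; exact growthRate_le _⟩ ⟨M, hM, rfl⟩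

theorem revCapacity_nonneg [Fintype V] (G : SimpleGraph V) : 0 ≤ revCapacity G :=
  (growthRate_nonneg _).trans (growthRate_le_revCapacity (RevPartialDFA.distinguishable_empty G))

theorem exists_lt_growthRate_of_lt_revCapacity {G : SimpleGraph V} {u : ℝ}
    (h : u < revCapacity G) :
    ∃ M : RevPartialDFA V, Distinguishable G M.accepts ∧ u < growthRate M.accepts := by
  obtain ⟨_, ⟨M, hM, rfl⟩, hu⟩ :=
    exists_lt_of_lt_csSup (by exact ⟨_, _, RevPartialDFA.distinguishable_empty G, rfl⟩) h
  exact ⟨M, hM, hu⟩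

end

/-- the reversible capacity is supermultiplicative under the strong
graph product. -/
theorem revCapacity_strongProd_ge {V W : Type*} [Fintype V] [Fintype W]
    (G : SimpleGraph V) (H : SimpleGraph W) :
    revCapacity (strongProd G H) ≥ revCapacity G * revCapacity H := by
  refine mul_le_of_forall_lt_of_nonneg (revCapacity_nonneg G) (revCapacity_nonneg _)
    fun u hu huG v hv hvH => ?_
  obtain ⟨M, hM, huM⟩ := exists_lt_growthRate_of_lt_revCapacity huG
  obtain ⟨N, hN, hvN⟩ := exists_lt_growthRate_of_lt_revCapacity hvH
  obtain ⟨m, hm, s, hs, hA⟩ := M.exists_pow_lt_ncard_wordsTo hu huM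
  obtain ⟨n, hn, t, ht, hB⟩ := N.exists_pow_lt_ncard_wordsTo hv hvN
  have : NeZero m := ⟨hm.ne'⟩
  have : NeZero n := ⟨hn.ne'⟩
  calc u * v ≤ growthRate ((M.loop s m).prod (N.loop t n)).accepts :=
        RevPartialDFA.mul_le_growthRate_prod_loop hu hv hA.le hB.le
    _ ≤ revCapacity (strongProd G H) := by
        refine growthRate_le_revCapacity ?_
        rw [RevPartialDFA.prod_accepts]
        exact (RevPartialDFA.distinguishable_loop hM hs).prod
          (RevPartialDFA.distinguishable_loop hN ht)
end

section
/- The reversible capacity of the 5-cycle equals the square root of 5: Θ_REV(C₅) = √5. -/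
open Filter

/-!
Upper bound: Lovász's umbrella is an orthonormal representation of C₅ in ℝ³ (unit vectors,
orthogonal on non-adjacent vertices) all of whose vectors have squared inner product `1/√5` with a
unit handle. The words of length `n` of a distinguishable language form an independent set of the
strong power `C₅^⊠n`, so the tensor products of umbrella vectors along them are orthonormal, and
Bessel's inequality against the `n`-th tensor power of the handle bounds their number by `√5 ^ n`.

Lower bound: `a ↦ 2a` is an isomorphism from C₅ onto its complement, so two distinct letters are
told apart either by themselves or by their doubles. Hence the words `a₁ (2a₁) a₂ (2a₂) ⋯`
form a distinguishable language with `5 ^ k` words of length `2k`, and a reversible automaton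
accepts it by remembering only the first letter of the current pair.
-/

open Real Function Filter

namespace EuclideanSpace

variable {ι β : Type*} [Fintype ι] [Fintype β]

noncomputable def tprod (v : ι → EuclideanSpace ℝ β) : EuclideanSpace ℝ (ι → β) :=
  WithLp.toLp 2 fun f => ∏ i, v i (f i)

theorem inner_tprod [DecidableEq ι] (v w : ι → EuclideanSpace ℝ β) :
    inner ℝ (tprod v) (tprod w) = ∏ i, inner ℝ (v i) (w i) := by
  simp only [tprod, PiLp.inner_apply, RCLike.inner_apply, conj_trivial]
  rw [Finset.prod_univ_sum, Fintype.piFinset_univ]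
  exact Finset.sum_congr rfl fun f _ => Finset.prod_mul_distrib.symm

theorem norm_tprod [DecidableEq ι] (v : ι → EuclideanSpace ℝ β) :
    ‖tprod v‖ = ∏ i, ‖v i‖ := by
  rw [← pow_left_inj₀ (norm_nonneg _) (Finset.prod_nonneg fun i _ => norm_nonneg (v i))
    two_ne_zero, ← real_inner_self_eq_norm_sq, inner_tprod, ← Finset.prod_pow]
  simp only [real_inner_self_eq_norm_sq]

end EuclideanSpace

namespace SimpleGraph

open EuclideanSpace in
theorem card_mul_pow_le_one_of_orthonormal_representation {V β : Type*} [Fintype β]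
    {G : SimpleGraph V} (u : V → EuclideanSpace ℝ β) (hu : ∀ a, ‖u a‖ = 1)
    (hG : ∀ a b, a ≠ b → ¬ G.Adj a b → inner ℝ (u a) (u b) = 0)
    (c : EuclideanSpace ℝ β) (hc : ‖c‖ = 1) {κ : ℝ} (hκ : 0 ≤ κ)
    (hcu : ∀ a, κ ≤ inner ℝ (u a) c ^ 2) {n : ℕ} (s : Finset (Fin n → V))
    (hs : (s : Set (Fin n → V)).Pairwise fun x y => ¬ (strongPow G n).Adj x y) :
    s.card * κ ^ n ≤ 1 := by
  classical
  let U (x : s) : EuclideanSpace ℝ (Fin n → β) := tprod fun i => u (x.1 i)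
  have hU : Orthonormal ℝ U := by
    rw [orthonormal_iff_ite]
    intro x y
    split_ifs with hxy
    · subst hxy
      simp [U, norm_tprod, hu]
    · have hne : x.1 ≠ y.1 := Subtype.coe_ne_coe.mpr hxy
      obtain ⟨i, hi, hadj⟩ : ∃ i, x.1 i ≠ y.1 i ∧ ¬ G.Adj (x.1 i) (y.1 i) := by
        by_contra! h
        exact hs x.2 y.2 hne ⟨hne, fun i => or_iff_not_imp_left.mpr (h i)⟩
      exact (inner_tprod _ _).trans (Finset.prod_eq_zero (Finset.mem_univ i) (hG _ _ hi hadj))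
  have hC : ‖tprod fun _ : Fin n => c‖ = 1 := by simp [norm_tprod, hc]
  have hbessel := hU.sum_inner_products_le (tprod fun _ => c) (s := Finset.univ)
  rw [hC, one_pow, Finset.sum_coe_sort_eq_attach] at hbessel
  calc (s.card : ℝ) * κ ^ n = ∑ x ∈ s.attach, κ ^ n := by simp
    _ ≤ ∑ x ∈ s.attach, ‖inner ℝ (U x) (tprod fun _ => c)‖ ^ 2 := by
      refine Finset.sum_le_sum fun x _ => ?_
      rw [Real.norm_eq_abs, sq_abs, inner_tprod, ← Finset.prod_pow]
      calc κ ^ n = ∏ _i : Fin n, κ := by simp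
        _ ≤ _ := Finset.prod_le_prod (fun _ _ => hκ) fun i _ => hcu (x.1 i)
    _ ≤ 1 := hbessel

end SimpleGraph

section Language

variable {V : Type*}

theorem distinguishable_iff_forall₂ {G : SimpleGraph V} {L : Set (List V)} :
    Distinguishable G L ↔
      ∀ x ∈ L, ∀ y ∈ L, List.Forall₂ (fun a b => a = b ∨ G.Adj a b) x y → x = y := by
  simp only [Distinguishable, List.forall₂_iff_get]
  refine forall₂_congr fun x _ => forall₂_congr fun y _ => ⟨?_, ?_⟩
  · rintro h ⟨hlen, hconf⟩
    by_contra hne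
    obtain ⟨i, hx, hy, hneq, hadj⟩ := h hlen hne
    exact (hconf i hx hy).elim hneq hadj
  · intro h hlen hne
    by_contra! hconf
    exact hne (h ⟨hlen, fun i hx hy => or_iff_not_imp_left.2 (hconf i hx hy)⟩)

theorem Distinguishable.exists_indep_finset [Finite V] {G : SimpleGraph V} {L : Set (List V)}
    (hL : Distinguishable G L) (n : ℕ) :
    ∃ s : Finset (Fin n → V),
      (s : Set (Fin n → V)).Pairwise (fun x y => ¬ (strongPow G n).Adj x y) ∧
        s.card = {w ∈ L | w.length = n}.ncard := by
  set T : Set (Fin n → V) := {f | List.ofFn f ∈ L}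
  have hslice : {w ∈ L | w.length = n} = List.ofFn '' T := by
    ext w
    constructor
    · rintro ⟨hw, rfl⟩
      exact ⟨w.get, by simpa [T, List.ofFn_get] using hw, List.ofFn_get w⟩
    · rintro ⟨f, hf, rfl⟩
      exact ⟨hf, List.length_ofFn⟩
  refine ⟨T.toFinite.toFinset, fun f hf g hg hne hadj => hne ?_, ?_⟩
  · simp only [Set.Finite.coe_toFinset] at hf hg
    refine List.ofFn_injective (distinguishable_iff_forall₂.1 hL _ hf _ hg ?_)
    simpa [List.forall₂_iff_get] using fun i hi => hadj.2 ⟨i, hi⟩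
  · rw [hslice, Set.ncard_image_of_injective _ List.ofFn_injective, Set.ncard_eq_toFinset_card]

theorem eventually_ncard_rpow_le {L : Set (List V)} {r : ℝ} (hr : 0 ≤ r)
    (h : ∀ n, ({w ∈ L | w.length = n}.ncard : ℝ) ≤ r ^ n) :
    ∀ᶠ n : ℕ in atTop, ({w ∈ L | w.length = n}.ncard : ℝ) ^ (1 / (n : ℝ)) ≤ r := by
  filter_upwards [eventually_ne_atTop 0] with n hn
  calc ({w ∈ L | w.length = n}.ncard : ℝ) ^ (1 / (n : ℝ)) ≤ (r ^ n) ^ (1 / (n : ℝ)) :=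
        rpow_le_rpow (Nat.cast_nonneg _) (h n) (by positivity)
    _ = r := by rw [one_div, pow_rpow_inv_natCast hr hn]

theorem growthRate_le_s16 {L : Set (List V)} {r : ℝ} (hr : 0 ≤ r)
    (h : ∀ n, ({w ∈ L | w.length = n}.ncard : ℝ) ≤ r ^ n) : growthRate L ≤ r :=
  limsup_le_of_le (isCoboundedUnder_le_of_le atTop fun _ => by positivity)
    (eventually_ncard_rpow_le hr h)

theorem growthRate_eq {L : Set (List V)} {r : ℝ} (hr : 0 ≤ r)
    (h : ∀ n, ({w ∈ L | w.length = n}.ncard : ℝ) ≤ r ^ n) {m : ℕ} (hm : 0 < m)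
    (hlow : ∀ k, r ^ (m * k) ≤ {w ∈ L | w.length = m * k}.ncard) : growthRate L = r := by
  refine le_antisymm (growthRate_le_s16 hr h) (le_limsup_of_frequently_le ?_
    ⟨r, eventually_ncard_rpow_le hr h⟩)
  refine frequently_atTop.2 fun N => ⟨m * (N + 1), by nlinarith, ?_⟩
  calc r = (r ^ (m * (N + 1))) ^ (1 / ((m * (N + 1) : ℕ) : ℝ)) := by
        rw [one_div, pow_rpow_inv_natCast hr (by positivity)]
    _ ≤ _ := rpow_le_rpow (by positivity) (hlow (N + 1)) (by positivity)

end Language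

section PairCode

variable {V : Type} (φ : V → V)

def pairCode (l : List V) : List V := l.flatMap fun a => [a, φ a]

@[simp] theorem pairCode_nil : pairCode φ [] = [] := rfl

@[simp] theorem pairCode_cons (a : V) (l : List V) :
    pairCode φ (a :: l) = a :: φ a :: pairCode φ l := rfl

@[simp] theorem length_pairCode (l : List V) : (pairCode φ l).length = 2 * l.length := by
  induction l with
  | nil => rfl
  | cons a l ih => simp [ih]; ring

theorem pairCode_injective : Injective (pairCode φ) := by
  intro l₁
  induction l₁ with
  | nil => rintro (_ | _) h <;> simp_all
  | cons a l₁ ih =>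
    rintro (_ | ⟨b, l₂⟩) h
    · simp at h
    · simp only [pairCode_cons, List.cons.injEq] at h
      rw [h.1, ih h.2.2]

variable [DecidableEq V]

def pairStep : Option V → V → Option (Option V)
  | none, a => some (some a)
  | some a, b => if b = φ a then some none else none

@[simp] theorem pairStep_none (a : V) : pairStep φ none a = some (some a) := rfl

@[simp] theorem pairStep_some (a b : V) :
    pairStep φ (some a) b = if b = φ a then some none else none := rfl

def pairDFA [Fintype V] (hφ : Injective φ) : RevPartialDFA V where
  σ := Option V
  fintype := inferInstance
  step := pairStep φ
  start := none
  accept := {none}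
  reversible := by
    rintro b (_ | x) (_ | y) q hx hy <;> simp only [pairStep_none, pairStep_some] at hx hy
    · rfl
    · obtain rfl := Option.some.inj hx
      simp at hy
    · obtain rfl := Option.some.inj hy
      simp at hx
    · simp only [Option.ite_none_right_eq_some, Option.some.injEq] at hx hy
      rw [hφ (hx.1.symm.trans hy.1)]

theorem foldl_pairStep_none (w : List V) :
    w.foldl (fun os a => os.bind fun s => pairStep φ s a) none = none := by
  induction w with
  | nil => rfl
  | cons a w ih => exact ih

theorem foldl_pairStep_eq_some_none_iff : ∀ w : List V,
    w.foldl (fun os a => os.bind fun s => pairStep φ s a) (some none) = some none ↔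
      ∃ l, pairCode φ l = w
  | [] => by simpa using ⟨[], rfl⟩
  | [a] => by
    simp only [List.foldl_cons, List.foldl_nil, Option.bind_some, pairStep_none, Option.some.injEq,
      reduceCtorEq, false_iff]
    rintro ⟨_ | ⟨b, l⟩, h⟩ <;> simp at h
  | a :: b :: w => by
    have ih := foldl_pairStep_eq_some_none_iff w
    by_cases hb : b = φ a
    · simp only [List.foldl_cons, Option.bind_some, pairStep_none, pairStep_some, hb, if_true, ih]
      constructor
      · rintro ⟨l, rfl⟩; exact ⟨a :: l, rfl⟩
      · rintro ⟨_ | ⟨c, l⟩, h⟩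
        · simp at h
        · simp only [pairCode_cons, List.cons.injEq] at h
          exact ⟨l, h.2.2⟩
    · simp only [List.foldl_cons, Option.bind_some, pairStep_none, pairStep_some, hb, if_false,
        foldl_pairStep_none, reduceCtorEq, false_iff]
      rintro ⟨_ | ⟨c, l⟩, h⟩
      · simp at h
      · simp only [pairCode_cons, List.cons.injEq] at h
        exact hb (h.1 ▸ h.2.1.symm)

variable [Fintype V] {φ} (hφ : Injective φ)

theorem mem_pairDFA_accepts {w : List V} :
    w ∈ (pairDFA φ hφ).accepts ↔ ∃ l, pairCode φ l = w := by
  rw [← foldl_pairStep_eq_some_none_iff]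
  constructor
  · rintro ⟨_, rfl, h⟩
    exact h
  · exact fun h => ⟨none, rfl, h⟩

theorem distinguishable_pairDFA {G : SimpleGraph V}
    (hG : ∀ a b, (a = b ∨ G.Adj a b) → (φ a = φ b ∨ G.Adj (φ a) (φ b)) → a = b) :
    Distinguishable G (pairDFA φ hφ).accepts := by
  rw [distinguishable_iff_forall₂]
  rintro _ hx _ hy
  obtain ⟨l₁, rfl⟩ := (mem_pairDFA_accepts hφ).1 hx
  obtain ⟨l₂, rfl⟩ := (mem_pairDFA_accepts hφ).1 hy
  intro h
  congr 1
  clear hx hy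
  induction l₁ generalizing l₂ with
  | nil => cases l₂ <;> simp_all
  | cons a l₁ ih =>
    cases l₂ with
    | nil => simp at h
    | cons b l₂ =>
      simp only [pairCode_cons, List.forall₂_cons] at h
      rw [hG a b h.1 h.2.1, ih l₂ h.2.2]

theorem card_pow_le_ncard_pairDFA (k : ℕ) :
    Fintype.card V ^ k ≤ {w ∈ (pairDFA φ hφ).accepts | w.length = 2 * k}.ncard := by
  set code : (Fin k → V) → List V := pairCode φ ∘ List.ofFn
  have hsub : code '' Set.univ ⊆ {w ∈ (pairDFA φ hφ).accepts | w.length = 2 * k} := by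
    rintro _ ⟨f, -, rfl⟩
    exact ⟨(mem_pairDFA_accepts hφ).2 ⟨_, rfl⟩, by simp [code]⟩
  calc Fintype.card V ^ k = (code '' Set.univ).ncard := by
        rw [Set.ncard_image_of_injective _ ((pairCode_injective φ).comp List.ofFn_injective),
          Set.ncard_univ, Nat.card_eq_fintype_card, Fintype.card_fun, Fintype.card_fin]
    _ ≤ _ := Set.ncard_le_ncard hsub ((List.finite_length_eq V _).subset fun _ hw => hw.2)

end PairCode

theorem Real.cos_two_pi_mul_div_five {m : ℤ} (hm : m % 5 = 2 ∨ m % 5 = 3) :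
    cos (2 * π * m / 5) = -cos (π / 5) := by
  have hsplit : 2 * π * m / 5 = 2 * π * (m % 5 : ℤ) / 5 + (m / 5 : ℤ) * (2 * π) := by
    conv_lhs => rw [← Int.emod_add_mul_ediv m 5]
    push_cast
    ring
  rw [hsplit, cos_add_int_mul_two_pi]
  rcases hm with h | h <;> rw [h] <;> push_cast
  · rw [show 2 * π * 2 / 5 = π - π / 5 by ring, cos_pi_sub]
  · rw [show 2 * π * 3 / 5 = π / 5 + π by ring, cos_add_pi]

theorem Real.cos_pi_div_five_pos : 0 < cos (π / 5) := by
  rw [cos_pi_div_five]; positivity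

namespace SimpleGraph.cycleGraph

theorem emod_five_of_not_adj : ∀ j k : Fin 5, j ≠ k → ¬ (cycleGraph 5).Adj j k →
    ((j : ℤ) - k) % 5 = 2 ∨ ((j : ℤ) - k) % 5 = 3 := by
  decide

-- The height `√(cos (π / 5))` makes ribs two steps apart orthogonal,
-- since `cos (4π / 5) = -cos (π / 5)`.
noncomputable def umbrellaRib (k : Fin 5) : EuclideanSpace ℝ (Fin 3) :=
  !₂[cos (2 * π * k / 5), sin (2 * π * k / 5), √(cos (π / 5))]

theorem inner_umbrellaRib (j k : Fin 5) :
    inner ℝ (umbrellaRib j) (umbrellaRib k) =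
      cos (2 * π * j / 5 - 2 * π * k / 5) + cos (π / 5) := by
  simp only [umbrellaRib, PiLp.inner_apply, Fin.sum_univ_three, cos_sub, Matrix.cons_val,
    RCLike.inner_apply, conj_trivial, mul_self_sqrt cos_pi_div_five_pos.le]
  ring

theorem inner_umbrellaRib_eq_zero {j k : Fin 5} (hne : j ≠ k) (hadj : ¬ (cycleGraph 5).Adj j k) :
    inner ℝ (umbrellaRib j) (umbrellaRib k) = 0 := by
  have h := Real.cos_two_pi_mul_div_five (emod_five_of_not_adj j k hne hadj)
  rw [inner_umbrellaRib, ← neg_add_cancel (cos (π / 5)), ← h]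
  push_cast
  ring_nf

theorem norm_umbrellaRib_sq (k : Fin 5) : ‖umbrellaRib k‖ ^ 2 = 1 + cos (π / 5) := by
  rw [← real_inner_self_eq_norm_sq, inner_umbrellaRib, sub_self, cos_zero]

noncomputable def umbrella (k : Fin 5) : EuclideanSpace ℝ (Fin 3) :=
  ‖umbrellaRib k‖⁻¹ • umbrellaRib k

noncomputable def umbrellaHandle : EuclideanSpace ℝ (Fin 3) := EuclideanSpace.single 2 1

theorem norm_umbrella (k : Fin 5) : ‖umbrella k‖ = 1 := by
  refine norm_smul_inv_norm fun h => ?_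
  have := norm_umbrellaRib_sq k
  rw [h, norm_zero] at this
  linarith [cos_pi_div_five_pos]

theorem inner_umbrella_handle_sq (k : Fin 5) :
    inner ℝ (umbrella k) umbrellaHandle ^ 2 = 1 / √5 := by
  have hrib : inner ℝ (umbrellaRib k) umbrellaHandle = √(cos (π / 5)) := by
    simp [umbrellaRib, umbrellaHandle, PiLp.inner_apply, -cos_pi_div_five]
  rw [umbrella, real_inner_smul_left, hrib, mul_pow, inv_pow, norm_umbrellaRib_sq,
    sq_sqrt cos_pi_div_five_pos.le, cos_pi_div_five]
  have h5 : √5 ^ 2 = 5 := sq_sqrt (by norm_num)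
  field_simp
  nlinarith

theorem inner_umbrella_eq_zero {j k : Fin 5} (hne : j ≠ k) (hadj : ¬ (cycleGraph 5).Adj j k) :
    inner ℝ (umbrella j) (umbrella k) = 0 := by
  rw [umbrella, umbrella, real_inner_smul_left, real_inner_smul_right,
    inner_umbrellaRib_eq_zero hne hadj, mul_zero, mul_zero]

end SimpleGraph.cycleGraph

open SimpleGraph.cycleGraph in
theorem Distinguishable.ncard_le_sqrt_five_pow {L : Set (List (Fin 5))}
    (hL : Distinguishable (SimpleGraph.cycleGraph 5) L) (n : ℕ) :
    ({w ∈ L | w.length = n}.ncard : ℝ) ≤ √5 ^ n := by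
  obtain ⟨s, hs, hcard⟩ := hL.exists_indep_finset n
  have h := SimpleGraph.card_mul_pow_le_one_of_orthonormal_representation umbrella norm_umbrella
    (fun _ _ => inner_umbrella_eq_zero) umbrellaHandle (by simp [umbrellaHandle])
    (by positivity) (fun k => (inner_umbrella_handle_sq k).ge) s hs
  rwa [hcard, one_div, inv_pow, ← div_eq_mul_inv, div_le_one (by positivity)] at h

/-- the reversible capacity of the 5-cycle is `√5`. -/
theorem revCapacity_cycleGraph_five :
    revCapacity (SimpleGraph.cycleGraph 5) = Real.sqrt 5 := by
  have hφ : Injective fun a : Fin 5 => 2 * a := by decide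
  have hdouble : ∀ a b : Fin 5, (a = b ∨ (SimpleGraph.cycleGraph 5).Adj a b) →
      (2 * a = 2 * b ∨ (SimpleGraph.cycleGraph 5).Adj (2 * a) (2 * b)) → a = b := by
    decide
  have hM := distinguishable_pairDFA hφ hdouble
  refine IsGreatest.csSup_eq ⟨⟨pairDFA _ hφ, hM, ?_⟩, ?_⟩
  · refine growthRate_eq (sqrt_nonneg 5) hM.ncard_le_sqrt_five_pow two_pos fun k => ?_
    rw [pow_mul, sq_sqrt (by norm_num : (0 : ℝ) ≤ 5)]
    exact_mod_cast card_pow_le_ncard_pairDFA hφ k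
  · rintro _ ⟨M, hM', rfl⟩
    exact growthRate_le_s16 (sqrt_nonneg 5) hM'.ncard_le_sqrt_five_pow
end
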